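/- arXiv:math/9501208 — 7 statements merged into one kernel-verified Lean document; each statement's English description precedes it below -/
import Mathlib

section
/- An ultrafilter U on ω is a P-point if and only if for every function h : ω → ω₁ there exists X ∈ U such that the order type of h''X is at most ω. -/
open Ordinal Set

/-- The order type of a set of ordinals: the unique ordinal order-isomorphic to it. -/
noncomputable def otype (S : Set Ordinal.{0}) : Ordinal.{1} :=
  @Ordinal.type S (Subrel (· < ·) (· ∈ S)) (by exact inferInstance)

/-- `f` is finite-to-one on `X`. -/
def FinToOneOn (f : ℕ → ℕ) (X : Set ℕ) : Prop := ∀ n : ℕ, (X ∩ f ⁻¹' {n}).Finite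

/-- `f` is constant on `X`. -/
def ConstOn (f : ℕ → ℕ) (X : Set ℕ) : Prop := ∃ c : ℕ, ∀ x ∈ X, f x = c

/-- `V >_∞ U`: some `f` pushes `V` forward to `U` but `f` is neither finite-to-one
nor constant on any member of `V`. -/
def InfGT (V U : Ultrafilter ℕ) : Prop :=
  ∃ f : ℕ → ℕ, Ultrafilter.map f V = U ∧ ∀ X ∈ V, ¬ FinToOneOn f X ∧ ¬ ConstOn f X

lemma aux_lt_omega0_of_card {o : Ordinal.{u}} (h : o.card < Cardinal.aleph0) : o < ω := by
  by_contra hlt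
  have := Ordinal.card_le_card (not_lt.1 hlt)
  rw [Ordinal.card_omega0] at this
  exact this.not_gt h

lemma aux_omega0_le_of_card {o : Ordinal.{u}} (h : Cardinal.aleph0 ≤ o.card) : ω ≤ o := by
  by_contra hlt
  obtain ⟨n, rfl⟩ := Ordinal.lt_omega0.1 (not_le.1 hlt)
  rw [Ordinal.card_nat] at h
  exact (Cardinal.nat_lt_aleph0 n).not_ge h

lemma otype_le_omega0_iff (S : Set Ordinal.{0}) :
    otype S ≤ ω ↔ ∀ a ∈ S, {b ∈ S | b < a}.Finite := by
  have _inst : IsWellOrder S (Subrel (· < ·) (· ∈ S)) := inferInstance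
  have hcard : ∀ x : S, (Ordinal.typein (Subrel (· < ·) (· ∈ S)) x).card
      = Cardinal.mk ({b ∈ S | b < (x : Ordinal)}) := by
    intro x
    rw [Ordinal.card_typein]
    exact Cardinal.mk_congr (Equiv.subtypeSubtypeEquivSubtypeInter _ _)
  unfold otype
  constructor
  · intro hle a ha
    by_contra hinf
    have h1 : ω ≤ Ordinal.typein (Subrel (· < ·) (· ∈ S)) ⟨a, ha⟩ := by
      apply aux_omega0_le_of_card
      rw [hcard]
      have hinf' : Set.Infinite {b ∈ S | b < a} := hinf
      have := hinf'.to_subtype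
      exact Cardinal.aleph0_le_mk _
    have h2 : Ordinal.typein (Subrel (· < ·) (· ∈ S)) ⟨a, ha⟩ < Ordinal.type (Subrel (· < ·) (· ∈ S)) :=
      Ordinal.typein_lt_type _ _
    exact (h1.trans_lt (h2.trans_le hle)).false
  · intro hfin
    by_contra hgt
    obtain ⟨x, hx⟩ := Ordinal.typein_surj (Subrel (· < ·) (· ∈ S)) (not_le.1 hgt)
    have hlt : Ordinal.typein (Subrel (· < ·) (· ∈ S)) x < ω := by
      apply aux_lt_omega0_of_card
      rw [hcard]
      have := (hfin x.1 x.2).to_subtype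
      exact Cardinal.lt_aleph0_of_finite _
    rw [hx] at hlt
    exact lt_irrefl _ hlt

/-- An ultrafilter containing all cofinite sets is a P-point iff for every `h : ω → ω₁`
there is `X ∈ U` with the order type of `h '' X` at most `ω`. -/
theorem stmt1 (U : Ultrafilter ℕ) (hU : (Filter.cofinite : Filter ℕ) ≤ U) :
    (∀ f : ℕ → ℕ, ∃ X ∈ U, ConstOn f X ∨ FinToOneOn f X) ↔
      (∀ h : ℕ → Ordinal.{0}, (∀ n, h n < ω₁) →
        ∃ X ∈ U, otype (h '' X) ≤ ω) := by
  constructor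
  · -- P-point implies the order type condition
    intro H h hh1
    set A : Ordinal.{0} → Set ℕ := fun β => {n | h n < β} with hA
    have hne : A ω₁ ∈ U := by
      have : A ω₁ = Set.univ := Set.eq_univ_of_forall fun n => hh1 n
      rw [this]; exact Filter.univ_mem
    set D : Set Ordinal.{0} := {β | A β ∈ U} with hD
    set δ : Ordinal.{0} := sInf D with hδ
    have hδD : δ ∈ D := csInf_mem ⟨ω₁, hne⟩
    have hδle : ∀ β, A β ∈ U → δ ≤ β := fun β hb => csInf_le' hb
    rcases Ordinal.zero_or_succ_or_isSuccLimit δ with h0 | ⟨γ, hγ⟩ | hlim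
    · -- δ = 0 : impossible
      exfalso
      have : A 0 ∈ U := h0 ▸ hδD
      have : (∅ : Set ℕ) ∈ U := by
        convert this using 1
        ext n; simp [hA, not_lt_zero]
      exact Ultrafilter.empty_notMem this
    · -- δ = succ γ : h is constant on a set in U
      have hγnot : A γ ∉ U := fun hm => ((hδle γ hm).trans_lt (hγ ▸ Order.lt_succ γ)).false
      have hXU : A δ ∩ (A γ)ᶜ ∈ U :=
        Filter.inter_mem hδD ((Ultrafilter.compl_mem_iff_notMem).2 hγnot)
      refine ⟨A δ ∩ (A γ)ᶜ, hXU, ?_⟩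
      rw [otype_le_omega0_iff]
      intro a ha
      have hval : ∀ n ∈ A δ ∩ (A γ)ᶜ, h n = γ := by
        rintro n ⟨hn1, hn2⟩
        have h1 : h n < Order.succ γ := hγ ▸ hn1
        have h2 : ¬ h n < γ := hn2
        exact le_antisymm (Order.lt_succ_iff.1 h1) (not_lt.1 h2)
      obtain ⟨m, hm, rfl⟩ := ha
      have : {b ∈ h '' (A δ ∩ (A γ)ᶜ) | b < h m} = ∅ := by
        ext b
        simp only [Set.mem_setOf_eq, Set.mem_empty_iff_false, iff_false, not_and]
        rintro ⟨n, hn, rfl⟩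
        rw [hval n hn, hval m hm]
        exact lt_irrefl _
      rw [this]; exact Set.finite_empty
    · -- δ limit
      have hδlt : δ < ω₁ := by
        have hsup : A (⨆ n, h n + 1) ∈ U := by
          have : A (⨆ n, h n + 1) = Set.univ := Set.eq_univ_of_forall fun n =>
            (lt_of_lt_of_le (Order.lt_succ (h n)) (by
              rw [← Ordinal.add_one_eq_succ]
              exact Ordinal.le_iSup (fun n => h n + 1) n))
          rw [this]; exact Filter.univ_mem
        refine (hδle _ hsup).trans_lt ?_
        have : ∀ n, h n + 1 < (Cardinal.aleph 1).ord := by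
          intro n
          rw [Ordinal.add_one_eq_succ]
          have := hh1 n
          rw [show (ω₁ : Ordinal.{0}) = (Cardinal.aleph 1).ord from (Cardinal.ord_aleph 1).symm]
            at this
          exact (Cardinal.isSuccLimit_ord (Cardinal.aleph0_le_aleph 1)).succ_lt this
        have := Ordinal.iSup_lt_omega_one (f := fun n => h n + 1) (by
          rwa [show (ω₁ : Ordinal.{0}) = (Cardinal.aleph 1).ord from (Cardinal.ord_aleph 1).symm])
        exact this
      have hcnt : (Set.Iio δ).Countable := by
        rw [Cardinal.countable_iff_lt_aleph_one, Ordinal.mk_Iio_ordinal]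
        have h1 : δ.card < Cardinal.aleph 1 := by
          rw [← Cardinal.lt_ord, Cardinal.ord_aleph]; exact hδlt
        have h2 : δ.card ≤ Cardinal.aleph0 := by
          rwa [← Cardinal.succ_aleph0, Order.lt_succ_iff] at h1
        calc Cardinal.lift.{1} δ.card ≤ Cardinal.lift.{1} Cardinal.aleph0 :=
              Cardinal.lift_le.2 h2
          _ = Cardinal.aleph0 := Cardinal.lift_aleph0
          _ < _ := Cardinal.aleph0_lt_aleph_one
      obtain ⟨g, hg⟩ := hcnt.exists_eq_range (by
        exact ⟨0, pos_iff_ne_zero.2 hlim.ne_bot⟩)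
      have hex : ∀ n, h n < δ → ∃ k, h n < g k := by
        intro n hn
        have h1 : h n + 1 ∈ Set.Iio δ := by
          rw [Set.mem_Iio, Ordinal.add_one_eq_succ]; exact hlim.succ_lt hn
        rw [hg] at h1
        obtain ⟨k, hk⟩ := h1
        refine ⟨k, ?_⟩
        rw [hk, Ordinal.add_one_eq_succ]
        exact Order.lt_succ _
      classical
      set f : ℕ → ℕ := fun n => if hn : h n < δ then Nat.find (hex n hn) else 0 with hf
      have hfspec : ∀ n (hn : h n < δ), h n < g (f n) := by
        intro n hn
        simp only [hf, dif_pos hn]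
        exact Nat.find_spec (hex n hn)
      have hfmin : ∀ n (hn : h n < δ) k, h n < g k → f n ≤ k := by
        intro n hn k hk
        simp only [hf, dif_pos hn]
        exact Nat.find_le hk
      obtain ⟨X0, hX0U, hcase⟩ := H f
      have hXU : X0 ∩ A δ ∈ U := Filter.inter_mem hX0U hδD
      rcases hcase with ⟨c, hc⟩ | hfin
      · -- constant case : contradiction with minimality of δ
        exfalso
        have hsub : X0 ∩ A δ ⊆ A (g c) := by
          rintro n ⟨hn1, hn2⟩
          have := hfspec n hn2
          rwa [hc n hn1] at this
        have : A (g c) ∈ U := Filter.mem_of_superset hXU hsub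
        have hgc : g c < δ := by
          have : g c ∈ Set.Iio δ := hg ▸ Set.mem_range_self c
          exact this
        exact ((hδle _ this).trans_lt hgc).false
      · -- finite-to-one case : order type ≤ ω
        refine ⟨X0 ∩ A δ, hXU, ?_⟩
        rw [otype_le_omega0_iff]
        rintro a ⟨m, hm, rfl⟩
        have hsub : {b ∈ h '' (X0 ∩ A δ) | b < h m}
            ⊆ h '' (⋃ k ∈ Set.Iic (f m), (X0 ∩ f ⁻¹' {k})) := by
          rintro b ⟨⟨n, hn, rfl⟩, hblt⟩
          have h1 : h n < g (f m) := hblt.trans (hfspec m hm.2)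
          have h2 : f n ≤ f m := hfmin n hn.2 _ h1
          exact ⟨n, Set.mem_biUnion (Set.mem_Iic.2 h2) ⟨hn.1, rfl⟩, rfl⟩
        refine Set.Finite.subset (Set.Finite.image h ?_) hsub
        apply Set.Finite.biUnion (Set.finite_Iic (f m))
        intro k _
        exact hfin k
  · -- order type condition implies P-point
    intro H f
    set h : ℕ → Ordinal.{0} := fun n => ω * (f n : Ordinal) + n with hh
    have hh1 : ∀ n, h n < ω₁ := by
      intro n
      rw [show (ω₁ : Ordinal.{0}) = (Cardinal.aleph 1).ord from (Cardinal.ord_aleph 1).symm,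
        Cardinal.lt_ord]
      have : (h n).card ≤ Cardinal.aleph0 := by
        simp only [hh, Ordinal.card_add, Ordinal.card_mul, Ordinal.card_omega0,
          Ordinal.card_nat]
        calc Cardinal.aleph0 * (f n : Cardinal) + (n : Cardinal)
            ≤ Cardinal.aleph0 * Cardinal.aleph0 + Cardinal.aleph0 :=
              add_le_add (mul_le_mul_right (Cardinal.nat_lt_aleph0 _).le _)
                (Cardinal.nat_lt_aleph0 _).le
          _ = Cardinal.aleph0 := by
              rw [Cardinal.aleph0_mul_aleph0, Cardinal.aleph0_add_aleph0]
      exact this.trans_lt Cardinal.aleph0_lt_aleph_one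
    obtain ⟨X, hXU, hX⟩ := H h hh1
    by_cases hfin : FinToOneOn f X
    · exact ⟨X, hXU, Or.inr hfin⟩
    · unfold FinToOneOn at hfin
      push_neg at hfin
      obtain ⟨c, hc⟩ := hfin
      have hbd : ∀ m ∈ X, f m ≤ c := by
        intro m hm
        by_contra hgt
        push_neg at hgt
        have hseg := (otype_le_omega0_iff _).1 hX (h m) ⟨m, hm, rfl⟩
        have hc' : Set.Infinite (X ∩ f ⁻¹' {c}) := hc
        have hinj : Set.InjOn h (X ∩ f ⁻¹' {c}) := by
          rintro a ⟨_, ha⟩ b ⟨_, hb⟩ hab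
          simp only [hh] at hab
          rw [Set.mem_preimage, Set.mem_singleton_iff] at ha hb
          rw [ha, hb] at hab
          have := (add_right_inj _).1 hab
          exact_mod_cast this
        refine Set.Infinite.mono ?_ (hc'.image hinj) hseg
        rintro b ⟨n, ⟨hn1, hn2⟩, rfl⟩
        rw [Set.mem_preimage, Set.mem_singleton_iff] at hn2
        refine ⟨⟨n, hn1, rfl⟩, ?_⟩
        simp only [hh, hn2]
        calc ω * (c : Ordinal) + (n : Ordinal)
            < ω * (c : Ordinal) + ω := add_lt_add_right (Ordinal.nat_lt_omega0 n) _
          _ = ω * ((c : Ordinal) + 1) := by rw [mul_add, mul_one]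
          _ ≤ ω * (f m : Ordinal) := by
              apply mul_le_mul_right
              rw [← Nat.cast_add_one]
              exact_mod_cast Nat.succ_le_of_lt hgt
          _ ≤ ω * (f m : Ordinal) + (m : Ordinal) := le_self_add
      -- f is bounded by c on X ; some fiber is in U
      have hcover : X ⊆ ⋃ i ∈ Set.Iic c, (X ∩ f ⁻¹' {i}) := by
        intro n hn
        exact Set.mem_biUnion (Set.mem_Iic.2 (hbd n hn)) ⟨hn, rfl⟩
      have hmem : (⋃ i ∈ Set.Iic c, (X ∩ f ⁻¹' {i})) ∈ U :=
        Filter.mem_of_superset hXU hcover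
      rw [Ultrafilter.finite_biUnion_mem_iff (Set.finite_Iic c)] at hmem
      obtain ⟨i, _, hi⟩ := hmem
      exact ⟨X ∩ f ⁻¹' {i}, hi, Or.inl ⟨i, fun x hx => hx.2⟩⟩
end

section
/- If U is an ultrafilter on ω and h : ω → ω₁, and the minimum order type of h''X over X ∈ U is finite in exponent, say exactly ω^k with k ∈ ω and k ≥ 1, then there exists a chain of ultrafilters U = U₀ >_∞ U₁ >_∞ ⋯ >_∞ U_{k-1}, i.e., a <_∞-chain of length k below (and including) U. -/
open Ordinal Set Function

section AuxLemmas

lemma otype_le_of_bound {S : Set Ordinal.{0}} {g : Ordinal.{0} → Ordinal.{1}} {o : Ordinal.{1}}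
    (mono : ∀ x ∈ S, ∀ y ∈ S, x < y → g x < g y) (bd : ∀ x ∈ S, g x < o) :
    otype S ≤ o := by
  haveI : IsWellOrder o.ToType ((· < ·) : o.ToType → o.ToType → Prop) := isWellOrder_lt
  have emb : Subrel ((· < ·) : Ordinal.{0} → Ordinal.{0} → Prop) (· ∈ S) ↪r
      ((· < ·) : o.ToType → o.ToType → Prop) := by
    refine RelEmbedding.ofMonotone (fun x => Ordinal.ToType.mk (o := o) ⟨g x.1, bd x.1 x.2⟩) ?_
    intro a b hab
    exact (Ordinal.ToType.mk (o := o)).lt_iff_lt.2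
      (Subtype.mk_lt_mk.2 (mono a.1 a.2 b.1 b.2 ((subrel_val _ _).1 hab)))
  have h1 : type (Subrel ((· < ·) : Ordinal.{0} → Ordinal.{0} → Prop) (· ∈ S))
      ≤ type ((· < ·) : o.ToType → o.ToType → Prop) := type_le_iff'.2 ⟨emb⟩
  exact le_trans h1 (type_toType o).le

lemma otype_image_eq {S : Set Ordinal.{0}} {g : Ordinal.{0} → Ordinal.{0}}
    (mono : ∀ x ∈ S, ∀ y ∈ S, x < y → g x < g y) : otype (g '' S) = otype S := by
  have hmonole : ∀ x ∈ S, ∀ y ∈ S, g x < g y → x < y := by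
    intro x hx y hy hg
    by_contra hxy
    rcases eq_or_lt_of_le (not_lt.1 hxy) with heq | hlt
    · rw [heq] at hg; exact lt_irrefl _ hg
    · exact lt_asymm hg (mono y hy x hx hlt)
  apply le_antisymm
  · have emb : Subrel ((· < ·) : Ordinal.{0} → Ordinal.{0} → Prop) (· ∈ (g '' S)) ↪r
        Subrel ((· < ·) : Ordinal.{0} → Ordinal.{0} → Prop) (· ∈ S) := by
      refine RelEmbedding.ofMonotone
        (fun z => ⟨invFunOn g S z.1, invFunOn_mem (by
          obtain ⟨x, hx, hgx⟩ := z.2; exact ⟨x, hx, hgx⟩)⟩) ?_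
      intro a b hab
      have ha : ∃ x ∈ S, g x = a.1 := by obtain ⟨x, hx, hgx⟩ := a.2; exact ⟨x, hx, hgx⟩
      have hb : ∃ x ∈ S, g x = b.1 := by obtain ⟨x, hx, hgx⟩ := b.2; exact ⟨x, hx, hgx⟩
      have hga : g (invFunOn g S a.1) = a.1 := invFunOn_eq ha
      have hgb : g (invFunOn g S b.1) = b.1 := invFunOn_eq hb
      refine (subrel_val _ _).2 ?_
      apply hmonole _ (invFunOn_mem ha) _ (invFunOn_mem hb)
      rw [hga, hgb]; exact (subrel_val _ _).1 hab
    exact type_le_iff'.2 ⟨emb⟩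
  · have emb : Subrel ((· < ·) : Ordinal.{0} → Ordinal.{0} → Prop) (· ∈ S) ↪r
        Subrel ((· < ·) : Ordinal.{0} → Ordinal.{0} → Prop) (· ∈ (g '' S)) := by
      refine RelEmbedding.ofMonotone (fun x => ⟨g x.1, mem_image_of_mem g x.2⟩) ?_
      intro a b hab
      exact (subrel_val _ _).2 (mono a.1 a.2 b.1 b.2 ((subrel_val _ _).1 hab))
    exact type_le_iff'.2 ⟨emb⟩

lemma typein_subrel_eq (S : Set Ordinal.{0}) (e : Ordinal.{0}) (he : e ∈ S) :
    typein (Subrel ((· < ·) : Ordinal.{0} → Ordinal.{0} → Prop) (· ∈ S)) ⟨e, he⟩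
      = otype {x | x ∈ S ∧ x < e} := by
  rw [← type_subrel]
  apply Quotient.sound
  exact ⟨⟨⟨fun b => ⟨b.1.1, b.1.2, b.2⟩, fun x => ⟨⟨x.1, x.2.1⟩, x.2.2⟩,
    fun b => rfl, fun x => rfl⟩, fun {a b} => Iff.rfl⟩⟩

lemma otype_lt_succ (S : Set Ordinal.{0}) : otype S < otype S + 1 := by
  rw [Ordinal.add_one_eq_succ]; exact Order.lt_succ _

lemma otype_insert_le {S : Set Ordinal.{0}} {a : Ordinal.{0}} (ha : ∀ x ∈ S, x < a) :
    otype (insert a S) ≤ otype S + 1 := by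
  classical
  have haS : a ∉ S := fun hmem => lt_irrefl a (ha a hmem)
  apply otype_le_of_bound
    (g := fun x => if hx : x ∈ S then
      typein (Subrel ((· < ·) : Ordinal.{0} → Ordinal.{0} → Prop) (· ∈ S)) ⟨x, hx⟩ else otype S)
  · intro x hx y hy hxy
    rcases hx with rfl | hxS
    · rcases hy with rfl | hyS
      · exact absurd hxy (lt_irrefl _)
      · exact absurd hxy (not_lt.2 (ha y hyS).le)
    · rcases hy with rfl | hyS
      · rw [dif_pos hxS, dif_neg haS]
        exact typein_lt_type _ _
      · rw [dif_pos hxS, dif_pos hyS]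
        exact (typein_lt_typein _).2 hxy
  · intro x hx
    rcases hx with rfl | hxS
    · rw [dif_neg haS]; exact otype_lt_succ S
    · rw [dif_pos hxS]
      exact lt_trans (typein_lt_type _ _) (otype_lt_succ S)

lemma otype_union_finite_le : ∀ (n : ℕ) (S F : Set Ordinal.{0}), F.Finite → F.ncard ≤ n →
    (∀ x ∈ S, ∀ y ∈ F, x < y) → otype (S ∪ F) ≤ otype S + n := by
  intro n
  induction n with
  | zero =>
    intro S F hF hcard _
    have : F = ∅ := by
      rw [← Set.ncard_eq_zero hF]; omega
    subst this
    simp only [Set.union_empty, Nat.cast_zero, add_zero, le_refl]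
  | succ n IH =>
    intro S F hF hcard hSF
    rcases F.eq_empty_or_nonempty with rfl | hne
    · simp only [Set.union_empty]
      exact le_self_add
    · obtain ⟨a, haF, hamin⟩ := wellFounded_lt.has_min F hne
      have hsplit : S ∪ F = insert a S ∪ (F \ {a}) := by
        ext x
        simp only [Set.mem_union, Set.mem_insert_iff, Set.mem_diff, Set.mem_singleton_iff]
        constructor
        · rintro (hx | hx)
          · tauto
          · by_cases hxa : x = a <;> tauto
        · rintro ((rfl | hx) | hx) <;> tauto
      rw [hsplit]
      have hcard' : (F \ {a}).ncard ≤ n := by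
        have := Set.ncard_diff_singleton_add_one haF hF
        omega
      have hbd : ∀ x ∈ insert a S, ∀ y ∈ F \ {a}, x < y := by
        rintro x (rfl | hxS) y ⟨hyF, hya⟩
        · exact lt_of_le_of_ne (not_lt.1 (hamin y hyF)) (Ne.symm hya)
        · exact hSF x hxS y hyF
      refine le_trans (IH (insert a S) (F \ {a}) hF.diff hcard' hbd) ?_
      have h1 : otype (insert a S) ≤ otype S + 1 :=
        otype_insert_le (fun x hx => hSF x hx a haF)
      calc otype (insert a S) + (n : Ordinal.{1}) ≤ (otype S + 1) + n :=
            add_le_add_left h1 _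
        _ = otype S + ((n + 1 : ℕ) : Ordinal.{1}) := by
            rw [add_assoc]
            congr 1
            norm_cast
            omega

lemma add_nat_lt_add_omega0 {a b : Ordinal.{1}} (h : a < b + ω) (n : ℕ) :
    a + n < b + ω := by
  induction n with
  | zero => simpa using h
  | succ n IH =>
    have hlim : Order.IsSuccLimit (b + ω) := isSuccLimit_add b isSuccLimit_omega0
    have : a + (n : Ordinal.{1}) + 1 < b + ω := by
      rw [Ordinal.add_one_eq_succ]
      exact hlim.succ_lt IH
    calc a + ((n + 1 : ℕ) : Ordinal.{1}) = a + ((n : Ordinal.{1}) + 1) := by norm_cast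
      _ = a + (n : Ordinal.{1}) + 1 := by rw [add_assoc]
      _ < b + ω := this

lemma add_nat_lt_of_lt_limit {γ δ : Ordinal.{0}} (hγ : Order.IsSuccLimit γ) (h : δ < γ) (n : ℕ) :
    δ + n < γ := by
  induction n with
  | zero => simpa using h
  | succ n IH =>
    have : δ + (n : Ordinal.{0}) + 1 < γ := by
      rw [Ordinal.add_one_eq_succ]; exact hγ.succ_lt IH
    calc δ + ((n + 1 : ℕ) : Ordinal.{0}) = δ + (n : Ordinal.{0}) + 1 := by
          rw [add_assoc]; norm_cast
      _ < γ := this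

lemma add_omega0_le_of_lt_limit {γ δ : Ordinal.{0}} (hγ : Order.IsSuccLimit γ) (h : δ < γ) :
    δ + ω ≤ γ := by
  rw [add_le_iff_of_isSuccLimit isSuccLimit_omega0]
  intro b hb
  obtain ⟨n, rfl⟩ := Ordinal.lt_omega0.1 hb
  exact (add_nat_lt_of_lt_limit hγ h n).le

lemma sum_lemma : ∀ γ : Ordinal.{0}, ∀ E : Set Ordinal.{0}, E ⊆ Iio (ω * γ) →
    (∀ β, {y | y ∈ E ∧ y / ω = β}.Finite) → otype E < lift.{1,0} γ + (ω : Ordinal.{1}) := by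
  intro γ
  induction γ using Ordinal.induction with
  | h γ IH =>
  intro E hsub hfib
  rcases Ordinal.zero_or_succ_or_isSuccLimit γ with rfl | ⟨γ₀, rfl⟩ | hγ
  · -- γ = 0
    have hE : E = ∅ := by
      ext x; simp only [Set.mem_empty_iff_false, iff_false]
      intro hx
      have := hsub hx
      rw [mul_zero] at this
      exact absurd this (not_lt_of_ge (zero_le (a := x)))
    subst hE
    have h1 : otype (∅ : Set Ordinal.{0}) ≤ 1 :=
      otype_le_of_bound (g := fun _ => 0) (by intro x hx; cases hx) (by intro x hx; cases hx)
    refine lt_of_le_of_lt h1 ?_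
    rw [lift_zero, zero_add]
    exact one_lt_omega0
  · -- γ = succ γ₀
    have hγ₀ : γ₀ < Order.succ γ₀ := Order.lt_succ γ₀
    set E₁ : Set Ordinal.{0} := E ∩ Iio (ω * γ₀) with hE₁
    set E₂ : Set Ordinal.{0} := E \ Iio (ω * γ₀) with hE₂
    have hE₂fib : E₂ ⊆ {y | y ∈ E ∧ y / ω = γ₀} := by
      rintro y ⟨hyE, hylt⟩
      refine ⟨hyE, le_antisymm ?_ ?_⟩
      · rw [Ordinal.div_le omega0_ne_zero]
        exact hsub hyE
      · rw [Ordinal.le_div omega0_ne_zero]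
        exact not_lt.1 hylt
    have hE₂fin : E₂.Finite := (hfib γ₀).subset hE₂fib
    have hunion : E = E₁ ∪ E₂ := (Set.inter_union_diff E _).symm
    have h1 : otype E ≤ otype E₁ + E₂.ncard := by
      rw [hunion]
      exact otype_union_finite_le E₂.ncard E₁ E₂ hE₂fin le_rfl
        (fun x hx y hy => lt_of_lt_of_le hx.2 (not_lt.1 hy.2))
    have h2 : otype E₁ < lift.{1,0} γ₀ + (ω : Ordinal.{1}) := by
      apply IH γ₀ hγ₀ E₁ (fun x hx => hx.2)
      intro β
      exact (hfib β).subset (fun y hy => ⟨hy.1.1, hy.2⟩)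
    have h3 : otype E < lift.{1,0} γ₀ + (ω : Ordinal.{1}) :=
      lt_of_le_of_lt h1 (add_nat_lt_add_omega0 h2 E₂.ncard)
    have : lift.{1,0} (Order.succ γ₀) + (ω : Ordinal.{1}) = lift.{1,0} γ₀ + (ω : Ordinal.{1}) := by
      rw [← Ordinal.add_one_eq_succ, lift_add, lift_one, add_assoc, one_add_omega0]
    rw [this]
    exact h3
  · -- limit
    have hle : otype E ≤ lift.{1,0} γ + 1 := by
      apply otype_le_of_bound (g := fun y => otype {x | x ∈ E ∧ x < y})
      · intro y hy y' hy' hyy'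
        have hmem : y ∈ {x | x ∈ E ∧ x < y'} := ⟨hy, hyy'⟩
        have hset : {x | x ∈ E ∧ x < y} = {x | x ∈ {x | x ∈ E ∧ x < y'} ∧ x < y} := by
          ext x
          simp only [Set.mem_setOf_eq]
          exact ⟨fun ⟨h1, h2⟩ => ⟨⟨h1, h2.trans hyy'⟩, h2⟩, fun ⟨⟨h1, _⟩, h2⟩ => ⟨h1, h2⟩⟩
        rw [hset, ← typein_subrel_eq _ y hmem]
        exact typein_lt_type _ _
      · intro y hy
        obtain ⟨δ, hδγ, hyδ⟩ := (lt_mul_iff_of_isSuccLimit hγ).1 (hsub hy)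
        have hsub' : {x | x ∈ E ∧ x < y} ⊆ Iio (ω * δ) :=
          fun x hx => lt_trans hx.2 hyδ
        have hfib' : ∀ β, {z | z ∈ {x | x ∈ E ∧ x < y} ∧ z / ω = β}.Finite :=
          fun β => (hfib β).subset (fun z hz => ⟨hz.1.1, hz.2⟩)
        have := IH δ hδγ _ hsub' hfib'
        have h2 : lift.{1,0} δ + (ω : Ordinal.{1}) ≤ lift.{1,0} γ := by
          rw [← lift_omega0.{1,0}, ← lift_add, lift_le]
          exact add_omega0_le_of_lt_limit hγ hδγ
        calc otype {x | x ∈ E ∧ x < y} < lift.{1,0} δ + (ω : Ordinal.{1}) := this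
          _ ≤ lift.{1,0} γ := h2
          _ < lift.{1,0} γ + 1 := by rw [Ordinal.add_one_eq_succ]; exact Order.lt_succ _
    refine lt_of_le_of_lt hle ?_
    exact add_lt_add_right one_lt_omega0 _

lemma div_div' (a : Ordinal.{0}) {b c : Ordinal.{0}} (hb : b ≠ 0) (hc : c ≠ 0) :
    a / b / c = a / (b * c) := by
  have hbc : b * c ≠ 0 := _root_.mul_ne_zero hb hc
  have key : ∀ d : Ordinal.{0}, d ≤ a / b / c ↔ d ≤ a / (b * c) := by
    intro d
    rw [Ordinal.le_div hc, Ordinal.le_div hb, Ordinal.le_div hbc, ← mul_assoc]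
  exact le_antisymm ((key _).1 le_rfl) ((key _).2 le_rfl)

lemma lift_omega0_pow (n : ℕ) :
    lift.{1,0} ((ω : Ordinal.{0}) ^ n) = (ω : Ordinal.{1}) ^ n := by
  induction n with
  | zero => simp
  | succ n IH => rw [pow_succ, pow_succ, lift_mul, IH, lift_omega0]

lemma card_omega0_pow_le (n : ℕ) : ((ω : Ordinal.{0}) ^ n).card ≤ Cardinal.aleph0 := by
  induction n with
  | zero => simp
  | succ n IH =>
    rw [pow_succ, Ordinal.card_mul, card_omega0]
    calc ((ω : Ordinal.{0}) ^ n).card * Cardinal.aleph0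
        ≤ Cardinal.aleph0 * Cardinal.aleph0 := mul_le_mul_left IH _
      _ = Cardinal.aleph0 := Cardinal.aleph0_mul_aleph0

lemma exists_enc (W : Ordinal.{0}) (hW : W.card ≤ Cardinal.aleph0) :
    ∃ enc : Ordinal.{0} → ℕ, ∀ q, q < W → ∀ q', q' < W → enc q = enc q' → q = q' := by
  classical
  have hcount : Countable (Iio W) := by
    rw [← Cardinal.mk_le_aleph0_iff, Ordinal.mk_Iio_ordinal]
    calc Cardinal.lift.{1} W.card ≤ Cardinal.lift.{1} Cardinal.aleph0 :=
          Cardinal.lift_le.2 hW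
      _ = Cardinal.aleph0 := by simp
  obtain ⟨f, hf⟩ := @Countable.exists_injective_nat (Iio W) hcount
  refine ⟨fun q => if h : q < W then f ⟨q, h⟩ else 0, ?_⟩
  intro q hq q' hq' heq
  simp only [dif_pos hq, dif_pos hq'] at heq
  have := hf heq
  exact Subtype.mk_eq_mk.1 this

end AuxLemmas

/-- If the minimum order type of `h '' X` over `X ∈ U` is exactly `ω ^ k` with `1 ≤ k < ω`,
then there is a `<_∞`-chain of length `k` below (and including) `U`:
`U = U₀ >_∞ U₁ >_∞ ⋯ >_∞ U_{k-1}`. -/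
theorem stmt2 (U : Ultrafilter ℕ) (h : ℕ → Ordinal.{0}) (hh : ∀ n, h n < ω₁) (k : ℕ)
    (hk : 1 ≤ k)
    (hmin : IsLeast {o : Ordinal.{1} | ∃ X ∈ U, otype (h '' X) = o} (ω ^ (k : Ordinal.{1}))) :
    ∃ V : ℕ → Ultrafilter ℕ, V 0 = U ∧ ∀ i : ℕ, i + 1 < k → InfGT (V i) (V (i + 1)) := by
  classical
  obtain ⟨⟨X, hXU, hXo⟩, hlb⟩ := hmin
  set W : Ordinal.{0} := (ω : Ordinal.{0}) ^ k with hWdef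
  have hpowpos : ∀ n : ℕ, (0 : Ordinal.{0}) < (ω : Ordinal.{0}) ^ n := fun n => by
    rw [← opow_natCast]; exact opow_pos _ omega0_pos
  have hpowne : ∀ n : ℕ, ((ω : Ordinal.{0}) ^ n) ≠ 0 := fun n => (hpowpos n).ne'
  have hWpos : (0 : Ordinal.{0}) < W := hpowpos k
  have hWlift : (ω : Ordinal.{1}) ^ (k : Ordinal.{1}) = lift.{1,0} W := by
    rw [opow_natCast, lift_omega0_pow]
  have hlow : ∀ A : Set ℕ, A ∈ U → lift.{1,0} W ≤ otype (h '' A) := by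
    intro A hA; rw [← hWlift]; exact hlb ⟨A, hA, rfl⟩
  have hXotype : otype (h '' X) = lift.{1,0} W := by rw [hXo, hWlift]
  -- the rank function
  have hrank : ∀ y : Ordinal.{0}, ∀ hy : y ∈ h '' X, ∃ z : Ordinal.{0},
      lift.{1,0} z
        = typein (Subrel ((· < ·) : Ordinal.{0} → Ordinal.{0} → Prop) (· ∈ (h '' X))) ⟨y, hy⟩
        ∧ z < W := by
    intro y hy
    have h1 : typein (Subrel ((· < ·) : Ordinal.{0} → Ordinal.{0} → Prop) (· ∈ (h '' X))) ⟨y, hy⟩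
        < lift.{1,0} W := by
      have h2 := typein_lt_type
        (Subrel ((· < ·) : Ordinal.{0} → Ordinal.{0} → Prop) (· ∈ (h '' X))) ⟨y, hy⟩
      rwa [show type (Subrel ((· < ·) : Ordinal.{0} → Ordinal.{0} → Prop) (· ∈ (h '' X)))
        = otype (h '' X) from rfl, hXotype] at h2
    obtain ⟨z, hz⟩ := Ordinal.mem_range_lift_of_le h1.le
    exact ⟨z, hz, lift_lt.1 (by rw [hz]; exact h1)⟩
  choose σf hσeq hσW using hrank
  set σ : Ordinal.{0} → Ordinal.{0} :=
    fun y => if hy : y ∈ h '' X then σf y hy else 0 with hσdef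
  have hσW' : ∀ y, σ y < W := by
    intro y
    rw [hσdef]; dsimp only
    by_cases hy : y ∈ h '' X
    · rw [dif_pos hy]; exact hσW y hy
    · rw [dif_neg hy]; exact hWpos
  have hσmono : ∀ y ∈ h '' X, ∀ y' ∈ h '' X, y < y' → σ y < σ y' := by
    intro y hy y' hy' hlt
    rw [hσdef]; dsimp only
    rw [dif_pos hy, dif_pos hy']
    apply lift_lt.{1,0}.1
    rw [hσeq y hy, hσeq y' hy']
    exact (typein_lt_typein _).2 hlt
  set ρ : ℕ → Ordinal.{0} := fun x => σ (h x) with hρdef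
  have hρW : ∀ x, ρ x < W := fun x => hσW' (h x)
  -- encoding of ordinals below W into ℕ
  obtain ⟨enc, hencinj⟩ := exists_enc W (card_omega0_pow_le k)
  set dec : ℕ → Ordinal.{0} :=
    fun n => if hq : ∃ q, q < W ∧ enc q = n then hq.choose else 0 with hdecdef
  have hdecenc : ∀ q, q < W → dec (enc q) = q := by
    intro q hq
    have hex : ∃ q', q' < W ∧ enc q' = enc q := ⟨q, hq, rfl⟩
    rw [hdecdef]; dsimp only
    rw [dif_pos hex]
    exact hencinj _ hex.choose_spec.1 _ hq hex.choose_spec.2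
  set G : ℕ → ℕ → ℕ := fun i x => enc (ρ x / (ω : Ordinal.{0}) ^ i) with hGdef
  have hdivW : ∀ (i : ℕ) (x : ℕ), ρ x / (ω : Ordinal.{0}) ^ i < W := by
    intro i x
    rw [Ordinal.div_lt (hpowne i)]
    exact lt_of_lt_of_le (hρW x) (Ordinal.le_mul_right W (hpowpos i))
  -- image identification
  have himgA : ∀ A : Set ℕ, A ⊆ X → otype (ρ '' A) = otype (h '' A) := by
    intro A hAX
    have h1 : ρ '' A = σ '' (h '' A) := by
      rw [Set.image_image]
    rw [h1]
    exact otype_image_eq (fun y hy y' hy' hlt =>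
      hσmono y (Set.image_mono hAX hy) y' (Set.image_mono hAX hy') hlt)
  -- key lemma: constancy contradiction
  have keyConst : ∀ i : ℕ, i + 1 < k → ∀ A : Set ℕ, A ∈ U → A ⊆ X →
      (∃ β, ∀ x ∈ A, ρ x / (ω : Ordinal.{0}) ^ (i + 1) = β) → False := by
    rintro i hik A hAU hAX ⟨β, hβ⟩
    have hub : otype (ρ '' A) ≤ lift.{1,0} ((ω : Ordinal.{0}) ^ (i + 1)) := by
      apply otype_le_of_bound (g := fun y => lift.{1,0} (y % (ω : Ordinal.{0}) ^ (i + 1)))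
      · rintro y ⟨x, hx, rfl⟩ y' ⟨x', hx', rfl⟩ hlt
        rw [lift_lt]
        have e1 := Ordinal.div_add_mod (ρ x) ((ω : Ordinal.{0}) ^ (i + 1))
        have e2 := Ordinal.div_add_mod (ρ x') ((ω : Ordinal.{0}) ^ (i + 1))
        rw [hβ x hx] at e1
        rw [hβ x' hx'] at e2
        have h3 : (ω : Ordinal.{0}) ^ (i + 1) * β + ρ x % (ω : Ordinal.{0}) ^ (i + 1)
            < (ω : Ordinal.{0}) ^ (i + 1) * β + ρ x' % (ω : Ordinal.{0}) ^ (i + 1) := by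
          rw [e1, e2]; exact hlt
        exact (add_lt_add_iff_left _).1 h3
      · rintro y ⟨x, hx, rfl⟩
        rw [lift_lt]
        exact Ordinal.mod_lt _ (hpowne _)
    have hcontra : lift.{1,0} W ≤ lift.{1,0} ((ω : Ordinal.{0}) ^ (i + 1)) := by
      calc lift.{1,0} W ≤ otype (h '' A) := hlow A hAU
        _ = otype (ρ '' A) := (himgA A hAX).symm
        _ ≤ _ := hub
    rw [lift_le] at hcontra
    have hlt : (ω : Ordinal.{0}) ^ (i + 1) < W := by
      rw [hWdef, ← opow_natCast, ← opow_natCast]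
      exact (opow_lt_opow_iff_right one_lt_omega0).2 (by exact_mod_cast hik)
    exact absurd hcontra (not_le.2 hlt)
  -- key lemma: finite-to-one contradiction
  have keyFin : ∀ i : ℕ, i + 1 < k → ∀ A : Set ℕ, A ∈ U → A ⊆ X →
      (∀ β, {b | b ∈ (fun y => y / (ω : Ordinal.{0}) ^ i) '' (ρ '' A) ∧ b / ω = β}.Finite) →
      False := by
    intro i hik A hAU hAX hfib
    set T : Set Ordinal.{0} := ρ '' A with hTdef
    set D : Set Ordinal.{0} := (fun y => y / (ω : Ordinal.{0}) ^ i) '' T with hDdef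
    obtain ⟨jj, hjj1, hk'⟩ : ∃ jj, 1 ≤ jj ∧ i + (1 + jj) = k := ⟨k - (i + 1), by omega, by omega⟩
    have hprod : (ω : Ordinal.{0}) ^ i * ((ω : Ordinal.{0}) * (ω : Ordinal.{0}) ^ jj) = W := by
      rw [hWdef, ← hk', pow_add, pow_add, pow_one]
    have hDsub : D ⊆ Iio ((ω : Ordinal.{0}) * (ω : Ordinal.{0}) ^ jj) := by
      rintro b ⟨y, hyT, rfl⟩
      rw [mem_Iio, Ordinal.div_lt (hpowne i), hprod]
      obtain ⟨x, hx, rfl⟩ := hyT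
      exact hρW x
    have hjjlim : Order.IsSuccLimit ((ω : Ordinal.{0}) ^ jj) := by
      obtain ⟨m, hm⟩ : ∃ m, jj = m + 1 := ⟨jj - 1, by omega⟩
      rw [hm, pow_succ]
      exact isSuccLimit_mul_right (hpowpos m) isSuccLimit_omega0
    have hcb : ∀ b, ∀ hb : b ∈ D,
        typein (Subrel ((· < ·) : Ordinal.{0} → Ordinal.{0} → Prop) (· ∈ D)) ⟨b, hb⟩
          < lift.{1,0} ((ω : Ordinal.{0}) ^ jj) := by
      intro b hb
      rw [typein_subrel_eq D b hb]
      set βb : Ordinal.{0} := b / ω with hβbdef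
      have hbβ : b < ω * (βb + 1) := by
        have := Ordinal.div_le omega0_ne_zero (a := b) (c := βb)
        rw [Ordinal.add_one_eq_succ]
        exact this.1 le_rfl
      have hsub1 : {x | x ∈ D ∧ x < b} ⊆ Iio ((ω : Ordinal.{0}) * (βb + 1)) :=
        fun x hx => lt_trans hx.2 hbβ
      have hfib1 : ∀ β, {y | y ∈ {x | x ∈ D ∧ x < b} ∧ y / ω = β}.Finite := by
        intro β
        refine (hfib β).subset ?_
        rintro y ⟨⟨hyD, _⟩, hyβ⟩
        exact ⟨hyD, hyβ⟩
      have hSUM := sum_lemma (βb + 1) _ hsub1 hfib1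
      have hβblt : βb < (ω : Ordinal.{0}) ^ jj := by
        rw [hβbdef, Ordinal.div_lt omega0_ne_zero]
        exact hDsub hb
      have hstep : lift.{1,0} (βb + 1) + (ω : Ordinal.{1})
          ≤ lift.{1,0} ((ω : Ordinal.{0}) ^ jj) := by
        rw [lift_add, lift_one, add_assoc, one_add_omega0, ← lift_omega0.{1,0}, ← lift_add,
          lift_le]
        exact add_omega0_le_of_lt_limit hjjlim hβblt
      exact lt_of_lt_of_le hSUM hstep
    set L : Ordinal.{1} := lift.{1,0} ((ω : Ordinal.{0}) ^ i) with hLdef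
    have hLpos : (0 : Ordinal.{1}) < L := by
      rw [hLdef]
      have h0 := lift_lt.{1,0}.2 (hpowpos i)
      rwa [lift_zero] at h0
    set cD : Ordinal.{0} → Ordinal.{1} := fun b =>
      if hb : b ∈ D then
        typein (Subrel ((· < ·) : Ordinal.{0} → Ordinal.{0} → Prop) (· ∈ D)) ⟨b, hb⟩ else 0
      with hcDdef
    have hcDlt : ∀ b ∈ D, cD b < lift.{1,0} ((ω : Ordinal.{0}) ^ jj) := by
      intro b hb
      rw [hcDdef]; dsimp only
      rw [dif_pos hb]
      exact hcb b hb
    have hcDmono : ∀ b ∈ D, ∀ b' ∈ D, b < b' → cD b < cD b' := by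
      intro b hb b' hb' hlt
      rw [hcDdef]; dsimp only
      rw [dif_pos hb, dif_pos hb']
      exact (typein_lt_typein _).2 hlt
    have hub : otype T ≤ L * lift.{1,0} ((ω : Ordinal.{0}) ^ jj) := by
      apply otype_le_of_bound
        (g := fun y => L * cD (y / (ω : Ordinal.{0}) ^ i) + lift.{1,0} (y % (ω : Ordinal.{0}) ^ i))
      · intro y hy y' hy' hlt
        have hbD : y / (ω : Ordinal.{0}) ^ i ∈ D := ⟨y, hy, rfl⟩
        have hb'D : y' / (ω : Ordinal.{0}) ^ i ∈ D := ⟨y', hy', rfl⟩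
        rcases eq_or_lt_of_le (Ordinal.div_le_left hlt.le ((ω : Ordinal.{0}) ^ i)) with heq | hblt
        · -- same block: compare mods
          have e1 := Ordinal.div_add_mod y ((ω : Ordinal.{0}) ^ i)
          have e2 := Ordinal.div_add_mod y' ((ω : Ordinal.{0}) ^ i)
          rw [heq] at e1
          have hmod : y % (ω : Ordinal.{0}) ^ i < y' % (ω : Ordinal.{0}) ^ i := by
            have h3 : (ω : Ordinal.{0}) ^ i * (y' / (ω : Ordinal.{0}) ^ i)
                  + y % (ω : Ordinal.{0}) ^ i
                < (ω : Ordinal.{0}) ^ i * (y' / (ω : Ordinal.{0}) ^ i)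
                  + y' % (ω : Ordinal.{0}) ^ i := by
              rw [e1, e2]; exact hlt
            exact (add_lt_add_iff_left _).1 h3
          rw [heq]
          exact add_lt_add_right (lift_lt.2 hmod) _
        · -- different block
          calc L * cD (y / (ω : Ordinal.{0}) ^ i) + lift.{1,0} (y % (ω : Ordinal.{0}) ^ i)
              < L * cD (y / (ω : Ordinal.{0}) ^ i) + L := by
                apply add_lt_add_right
                rw [hLdef]
                exact lift_lt.2 (Ordinal.mod_lt _ (hpowne _))
            _ = L * (cD (y / (ω : Ordinal.{0}) ^ i) + 1) := (mul_add_one L _).symm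
            _ ≤ L * cD (y' / (ω : Ordinal.{0}) ^ i) := by
                apply mul_le_mul_right
                rw [Ordinal.add_one_eq_succ]
                exact Order.succ_le_of_lt (hcDmono _ hbD _ hb'D hblt)
            _ ≤ L * cD (y' / (ω : Ordinal.{0}) ^ i) + lift.{1,0} (y' % (ω : Ordinal.{0}) ^ i) :=
                le_self_add
      · intro y hy
        have hbD : y / (ω : Ordinal.{0}) ^ i ∈ D := ⟨y, hy, rfl⟩
        calc L * cD (y / (ω : Ordinal.{0}) ^ i) + lift.{1,0} (y % (ω : Ordinal.{0}) ^ i)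
            < L * cD (y / (ω : Ordinal.{0}) ^ i) + L := by
              apply add_lt_add_right
              rw [hLdef]
              exact lift_lt.2 (Ordinal.mod_lt _ (hpowne _))
          _ = L * (cD (y / (ω : Ordinal.{0}) ^ i) + 1) := (mul_add_one L _).symm
          _ ≤ L * lift.{1,0} ((ω : Ordinal.{0}) ^ jj) := by
              apply mul_le_mul_right
              rw [Ordinal.add_one_eq_succ]
              exact Order.succ_le_of_lt (hcDlt _ hbD)
    have hfinal : (ω : Ordinal.{0}) ^ i * (ω : Ordinal.{0}) ^ jj < W := by
      rw [← pow_add, hWdef, ← opow_natCast, ← opow_natCast]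
      refine (opow_lt_opow_iff_right one_lt_omega0).2 ?_
      exact_mod_cast (by omega : i + jj < k)
    have h1 : lift.{1,0} W ≤ otype T := by
      rw [hTdef, himgA A hAX]
      exact hlow A hAU
    have h2 : otype T ≤ lift.{1,0} ((ω : Ordinal.{0}) ^ i * (ω : Ordinal.{0}) ^ jj) := by
      rw [lift_mul]
      exact hub
    exact absurd (le_trans h1 h2) (not_le.2 (lift_lt.2 hfinal))
  -- the chain
  set Vfun : ℕ → Ultrafilter ℕ := fun j => if j = 0 then U else Ultrafilter.map (G j) U
    with hVdef
  refine ⟨Vfun, by simp [hVdef], ?_⟩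
  intro i hik
  have hVi1 : Vfun (i + 1) = Ultrafilter.map (G (i + 1)) U := by
    rw [hVdef]; simp
  by_cases hi0 : i = 0
  · -- first step
    subst hi0
    have hV0 : Vfun 0 = U := by simp [hVdef]
    rw [hV0, hVi1]
    refine ⟨G 1, rfl, ?_⟩
    intro Y hY
    have hAU : Y ∩ X ∈ U := Filter.inter_mem hY hXU
    constructor
    · intro hfin
      apply keyFin 0 hik (Y ∩ X) hAU inter_subset_right
      intro β
      have himg : (fun y => y / (ω : Ordinal.{0}) ^ 0) '' (ρ '' (Y ∩ X)) = ρ '' (Y ∩ X) := by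
        have : (fun y : Ordinal.{0} => y / (ω : Ordinal.{0}) ^ 0) = id := by
          funext y; simp [pow_zero, Ordinal.div_one]
        rw [this, Set.image_id]
      rw [himg]
      apply ((hfin (enc β)).image ρ).subset
      rintro b ⟨⟨x, hxYX, rfl⟩, hbβ⟩
      refine ⟨x, ⟨hxYX.1, ?_⟩, rfl⟩
      show enc (ρ x / (ω : Ordinal.{0}) ^ 1) ∈ ({enc β} : Set ℕ)
      rw [pow_one, hbβ]
      rfl
    · rintro ⟨c, hc⟩
      apply keyConst 0 hik (Y ∩ X) hAU inter_subset_right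
      obtain ⟨x₀, hx₀⟩ := Ultrafilter.nonempty_of_mem hAU
      refine ⟨ρ x₀ / (ω : Ordinal.{0}) ^ (0 + 1), ?_⟩
      intro x hx
      apply hencinj _ (hdivW (0 + 1) x) _ (hdivW (0 + 1) x₀)
      have h1 : enc (ρ x / (ω : Ordinal.{0}) ^ 1) = c := hc x hx.1
      have h2 : enc (ρ x₀ / (ω : Ordinal.{0}) ^ 1) = c := hc x₀ hx₀.1
      show enc (ρ x / (ω : Ordinal.{0}) ^ (0 + 1)) = enc (ρ x₀ / (ω : Ordinal.{0}) ^ (0 + 1))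
      rw [(by norm_num : (0:ℕ) + 1 = 1), h1, h2]
  · -- later steps
    have hVi : Vfun i = Ultrafilter.map (G i) U := by
      rw [hVdef]; simp [hi0]
    rw [hVi, hVi1]
    refine ⟨fun n => enc (dec n / ω), ?_, ?_⟩
    · rw [Ultrafilter.map_map]
      congr 1
      funext x
      show enc (dec (enc (ρ x / (ω : Ordinal.{0}) ^ i)) / ω) = enc (ρ x / (ω : Ordinal.{0}) ^ (i + 1))
      rw [hdecenc _ (hdivW i x), div_div' _ (hpowne i) omega0_ne_zero, ← pow_succ]
    · intro Y hY
      rw [Ultrafilter.mem_map] at hY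
      have hAU : (G i ⁻¹' Y) ∩ X ∈ U := Filter.inter_mem hY hXU
      constructor
      · intro hfin
        apply keyFin i hik ((G i ⁻¹' Y) ∩ X) hAU inter_subset_right
        intro β
        have hbW : ∀ b ∈ {b | b ∈ (fun y => y / (ω : Ordinal.{0}) ^ i) ''
            (ρ '' ((G i ⁻¹' Y) ∩ X)) ∧ b / ω = β}, b < W := by
          rintro b ⟨⟨y, ⟨x, hx, rfl⟩, rfl⟩, -⟩
          exact hdivW i x
        have himg : enc '' {b | b ∈ (fun y => y / (ω : Ordinal.{0}) ^ i) ''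
            (ρ '' ((G i ⁻¹' Y) ∩ X)) ∧ b / ω = β}
            ⊆ Y ∩ (fun n => enc (dec n / ω)) ⁻¹' {enc β} := by
          rintro n ⟨b, hb, rfl⟩
          obtain ⟨⟨y, ⟨x, hx, rfl⟩, rfl⟩, hβ⟩ := hb
          refine ⟨hx.1, ?_⟩
          show enc (dec (enc (ρ x / (ω : Ordinal.{0}) ^ i)) / ω) ∈ ({enc β} : Set ℕ)
          rw [hdecenc _ (hdivW i x), hβ]
          rfl
        have hfinim := (hfin (enc β)).subset himg
        exact Set.Finite.of_finite_image hfinim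
          (fun b hb b' hb' he => hencinj b (hbW b hb) b' (hbW b' hb') he)
      · rintro ⟨c, hc⟩
        apply keyConst i hik ((G i ⁻¹' Y) ∩ X) hAU inter_subset_right
        obtain ⟨x₀, hx₀⟩ := Ultrafilter.nonempty_of_mem hAU
        refine ⟨ρ x₀ / (ω : Ordinal.{0}) ^ (i + 1), ?_⟩
        intro x hx
        have hcomp : ∀ z, z ∈ (G i ⁻¹' Y) ∩ X → enc (ρ z / (ω : Ordinal.{0}) ^ (i + 1)) = c := by
          intro z hz
          have hz1 : enc (dec (enc (ρ z / (ω : Ordinal.{0}) ^ i)) / ω) = c := hc (G i z) hz.1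
          rw [hdecenc _ (hdivW i z), div_div' _ (hpowne i) omega0_ne_zero, ← pow_succ] at hz1
          exact hz1
        exact hencinj _ (hdivW (i + 1) x) _ (hdivW (i + 1) x₀)
          (by rw [hcomp x hx, hcomp x₀ hx₀])
end

section
/- If U is an α-ultrafilter for some ordinal α ≤ ω₁, and all RK-predecessors of U are also α-ultrafilters, and U is not RK-minimal, then α is multiplicatively indecomposable in the sense required: α = ω^β where β is additively indecomposable. -/
open Ordinal Set

def IsAlphaUF (U : Ultrafilter ℕ) (α : Ordinal.{1}) : Prop :=
  IsLeast {a : Ordinal.{1} |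
    ∀ h : ℕ → Ordinal.{0}, (∀ n, h n < ω₁) → ∃ X ∈ U, otype (h '' X) ≤ a} α

/-- The Rudin–Keisler (pre)order. -/
def RKle (U V : Ultrafilter ℕ) : Prop := ∃ f : ℕ → ℕ, Ultrafilter.map f V = U

def RKequiv (U V : Ultrafilter ℕ) : Prop := RKle U V ∧ RKle V U

def IsPrincipalUF (U : Ultrafilter ℕ) : Prop := ∃ a : ℕ, U = pure a

/-- `V` is an RK-predecessor of `U`: `V = f(U)` for some `f`, and `V` is RK-equivalent
neither to a principal ultrafilter nor to `U` itself. -/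
def RKpred (V U : Ultrafilter ℕ) : Prop :=
  RKle V U ∧ ¬ (∃ W : Ultrafilter ℕ, IsPrincipalUF W ∧ RKequiv V W) ∧ ¬ RKequiv V U

namespace StmtAux

lemma otype_mono {A B : Set Ordinal.{0}} (h : A ⊆ B) : otype A ≤ otype B :=
  RelEmbedding.ordinal_type_le
    (RelEmbedding.ofMonotone (fun x => ⟨x.1, h x.2⟩) (fun _ _ hxy => hxy))

lemma otype_empty : otype (∅ : Set Ordinal.{0}) = 0 := by
  rw [otype, Ordinal.type_eq_zero_iff_isEmpty]
  exact ⟨fun x => x.2⟩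

lemma otype_eq_zero_iff {A : Set Ordinal.{0}} : otype A = 0 ↔ A = ∅ := by
  rw [otype, Ordinal.type_eq_zero_iff_isEmpty]
  constructor
  · intro h
    ext x
    simp only [mem_empty_iff_false, iff_false]
    intro hx
    exact h.elim ⟨x, hx⟩
  · rintro rfl
    exact ⟨fun x => x.2⟩

lemma otype_pos_of_mem {A : Set Ordinal.{0}} {a : Ordinal.{0}} (ha : a ∈ A) : 0 < otype A := by
  rcases eq_or_ne (otype A) 0 with h | h
  · rw [otype_eq_zero_iff] at h
    exact absurd (h ▸ ha) (notMem_empty a)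
  · exact pos_iff_ne_zero.mpr h

lemma otype_subsingleton {A : Set Ordinal.{0}} (h : A.Subsingleton) : otype A ≤ 1 := by
  rcases eq_or_ne A ∅ with rfl | hne
  · rw [otype_empty]; exact zero_le_one
  · obtain ⟨a, ha⟩ := nonempty_iff_ne_empty.mpr hne
    have hA : A = {a} := by
      ext x; constructor
      · intro hx; exact h hx ha
      · rintro rfl; exact ha
    subst hA
    have h1 : Nonempty (↥({a} : Set Ordinal.{0})) := ⟨⟨a, rfl⟩⟩
    have h2 : Subsingleton (↥({a} : Set Ordinal.{0})) := by
      constructor; rintro ⟨x, hx⟩ ⟨y, hy⟩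
      simp only [mem_singleton_iff] at hx hy
      subst hx; subst hy; rfl
    exact le_of_eq (Ordinal.type_eq_one_of_unique _)

/-- images under maps strictly monotone on the set have the same order type -/
lemma otype_image {A : Set Ordinal.{0}} {f : Ordinal.{0} → Ordinal.{0}}
    (hf : ∀ x ∈ A, ∀ y ∈ A, x < y → f x < f y) : otype (f '' A) = otype A := by
  classical
  apply le_antisymm
  · -- f '' A ↪ A via chosen preimages
    refine RelEmbedding.ordinal_type_le
      (RelEmbedding.ofMonotone
        (fun y => ⟨Classical.choose y.2, (Classical.choose_spec y.2).1⟩) ?_)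
    rintro ⟨y, hy⟩ ⟨y', hy'⟩ hlt
    -- hlt : y < y'
    set x := Classical.choose hy with hxdef
    set x' := Classical.choose hy' with hx'def
    have hx : x ∈ A ∧ f x = y := Classical.choose_spec hy
    have hx' : x' ∈ A ∧ f x' = y' := Classical.choose_spec hy'
    have hlt' : y < y' := hlt
    show x < x'
    rcases lt_trichotomy x x' with h | h | h
    · exact h
    · exfalso
      have : y = y' := by rw [← hx.2, ← hx'.2, h]
      rw [this] at hlt'
      exact lt_irrefl _ hlt'
    · exfalso
      have hgt := hf x' hx'.1 x hx.1 h
      rw [hx.2, hx'.2] at hgt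
      exact absurd hlt' (not_lt_of_gt hgt)
  · refine RelEmbedding.ordinal_type_le
      (RelEmbedding.ofMonotone (fun x => ⟨f x.1, mem_image_of_mem f x.2⟩) ?_)
    rintro ⟨x, hx⟩ ⟨y, hy⟩ hxy
    exact hf x hx y hy hxy

/-- the initial segment of `A` below an element `a ∈ A`, as typein -/
lemma otype_initSeg_eq_typein {A : Set Ordinal.{0}} {a : Ordinal.{0}} (ha : a ∈ A) :
    otype {x | x ∈ A ∧ x < a} =
      Ordinal.typein (Subrel ((· < ·) : Ordinal.{0} → Ordinal.{0} → Prop) (· ∈ A)) ⟨a, ha⟩ := by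
  rw [← Ordinal.type_subrel]
  rw [otype, eq_comm]
  apply RelIso.ordinal_type_eq
  refine ⟨⟨fun x => ⟨x.1.1, x.1.2, x.2⟩, fun y => ⟨⟨y.1, y.2.1⟩, y.2.2⟩, ?_, ?_⟩, ?_⟩
  · intro x; rfl
  · intro y; rfl
  · intro x y; exact Iff.rfl

lemma otype_initSeg_lt {A : Set Ordinal.{0}} {a : Ordinal.{0}} (ha : a ∈ A) :
    otype {x | x ∈ A ∧ x < a} < otype A := by
  rw [otype_initSeg_eq_typein ha]
  exact Ordinal.typein_lt_type _ _

lemma exists_initSeg_eq {A : Set Ordinal.{0}} {c : Ordinal.{1}} (hc : c < otype A) :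
    ∃ a ∈ A, otype {x | x ∈ A ∧ x < a} = c := by
  rw [otype] at hc
  set e := Ordinal.enum (Subrel ((· < ·) : Ordinal.{0} → Ordinal.{0} → Prop) (· ∈ A)) ⟨c, hc⟩ with he
  refine ⟨e.1, e.2, ?_⟩
  rw [otype_initSeg_eq_typein e.2]
  have h1 : (⟨e.1, e.2⟩ : ↥A) = e := rfl
  rw [h1, he]
  exact Ordinal.typein_enum _ _

lemma otype_le_of_initSeg {A : Set Ordinal.{0}} {μ : Ordinal.{1}}
    (h : ∀ a ∈ A, otype {x | x ∈ A ∧ x < a} < μ) : otype A ≤ μ := by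
  by_contra hlt
  push_neg at hlt
  obtain ⟨a, ha, heq⟩ := exists_initSeg_eq hlt
  exact absurd (heq ▸ h a ha) (lt_irrefl μ)

/-- concatenation upper bound -/
lemma otype_union_le {A B : Set Ordinal.{0}}
    (hsep : ∀ x ∈ A, ∀ y ∈ B, x < y) : otype (A ∪ B) ≤ otype A + otype B := by
  classical
  rw [otype, otype, otype, ← Ordinal.type_sum_lex]
  refine RelEmbedding.ordinal_type_le
    (RelEmbedding.ofMonotone
      (fun x => if hx : x.1 ∈ A then Sum.inl ⟨x.1, hx⟩ else
        Sum.inr ⟨x.1, x.2.resolve_left hx⟩) ?_)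
  rintro ⟨x, hx⟩ ⟨y, hy⟩ hxy
  by_cases hxA : x ∈ A <;> by_cases hyA : y ∈ A <;> simp only [hxA, hyA, dif_pos, dif_neg,
    not_false_iff]
  · exact Sum.Lex.inl hxy
  · exact Sum.Lex.sep _ _
  · exact absurd (hsep y hyA x (hx.resolve_left hxA)) (not_lt_of_gt hxy)
  · exact Sum.Lex.inr hxy

/-- concatenation lower bound -/
lemma otype_union_ge {A B : Set Ordinal.{0}}
    (hsep : ∀ x ∈ A, ∀ y ∈ B, x < y) : otype A + otype B ≤ otype (A ∪ B) := by
  classical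
  rw [otype, otype, otype, ← Ordinal.type_sum_lex]
  refine RelEmbedding.ordinal_type_le
    (RelEmbedding.ofMonotone
      (fun x => Sum.rec (fun a => ⟨a.1, Or.inl a.2⟩) (fun b => ⟨b.1, Or.inr b.2⟩) x) ?_)
  rintro (⟨x, hx⟩ | ⟨x, hx⟩) (⟨y, hy⟩ | ⟨y, hy⟩) hxy
  · cases hxy with
    | inl h => exact h
  · exact hsep x hx y hy
  · cases hxy
  · cases hxy with
    | inr h => exact h



/-- If `A` contains, for each `v` in a set `T`, a block `As v` of order type `≥ μ`,
with blocks ordered according to `v`, then `otype A ≥ μ * otype T`. -/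
lemma mul_otype_le {A T : Set Ordinal.{0}} {μ : Ordinal.{1}}
    (As : Ordinal.{0} → Set Ordinal.{0})
    (hsub : ∀ v ∈ T, As v ⊆ A)
    (hsep : ∀ v ∈ T, ∀ v' ∈ T, v < v' → ∀ x ∈ As v, ∀ y ∈ As v', x < y)
    (hbig : ∀ v ∈ T, μ ≤ otype (As v)) :
    μ * otype T ≤ otype A := by
  classical
  haveI iwo : IsWellOrder μ.ToType ((· < ·) : μ.ToType → μ.ToType → Prop) := isWellOrder_lt
  have hμ : ∀ v : ↥T, Nonempty (((· < ·) : μ.ToType → μ.ToType → Prop) ↪r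
      (Subrel (· < ·) (· ∈ As v.1))) := by
    intro v
    rw [← Ordinal.type_le_iff']
    have h1 : Ordinal.type ((· < ·) : μ.ToType → μ.ToType → Prop) = μ :=
      Ordinal.type_toType μ
    rw [h1]
    exact hbig v.1 v.2
  set e : ∀ v : ↥T, ((· < ·) : μ.ToType → μ.ToType → Prop) ↪r (Subrel (· < ·) (· ∈ As v.1)) :=
    fun v => Classical.choice (hμ v) with he
  haveI iwoT : IsWellOrder (↥T) (Subrel ((· < ·) : Ordinal.{0} → Ordinal.{0} → Prop) (· ∈ T)) := by
    exact inferInstance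
  haveI iwo2 : IsWellOrder (↥T × μ.ToType)
      (Prod.Lex (Subrel (· < ·) (· ∈ T)) ((· < ·) : μ.ToType → μ.ToType → Prop)) :=
    @instIsWellOrderProdLex _ _ _ _ iwoT iwo
  have key : Ordinal.type
      (Prod.Lex (Subrel (· < ·) (· ∈ T)) ((· < ·) : μ.ToType → μ.ToType → Prop))
      ≤ otype A := by
    refine RelEmbedding.ordinal_type_le
      (RelEmbedding.ofMonotone
        (fun p => ⟨(e p.1 p.2).1, hsub p.1.1 p.1.2 (e p.1 p.2).2⟩) ?_)
    rintro ⟨v, i⟩ ⟨w, j⟩ hlt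
    cases hlt with
    | left _ _ h =>
      exact hsep v.1 v.2 w.1 w.2 h _ (e v i).2 _ (e w j).2
    | right _ h =>
      show ((e v i).1 : Ordinal.{0}) < (e v j).1
      exact (e v).map_rel_iff.mpr h
  rw [Ordinal.type_prod_lex] at key
  have h1 : Ordinal.type ((· < ·) : μ.ToType → μ.ToType → Prop) = μ :=
    Ordinal.type_toType μ
  rw [h1] at key
  exact key


open Cardinal

/-! ### ω₁ closure facts -/

lemma lt_omega1_iff {o : Ordinal.{0}} : o < ω₁ ↔ o.card ≤ ℵ₀ := by
  rw [← Cardinal.ord_aleph 1, Cardinal.lt_ord, ← Cardinal.succ_aleph0, Order.lt_succ_iff]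

lemma add_lt_omega1 {a b : Ordinal.{0}} (ha : a < ω₁) (hb : b < ω₁) : a + b < ω₁ := by
  rw [lt_omega1_iff] at ha hb ⊢
  rw [Ordinal.card_add]
  exact (add_le_add ha hb).trans (le_of_eq Cardinal.aleph0_add_aleph0)

lemma mul_lt_omega1 {a b : Ordinal.{0}} (ha : a < ω₁) (hb : b < ω₁) : a * b < ω₁ := by
  rw [lt_omega1_iff] at ha hb ⊢
  rw [Ordinal.card_mul]
  exact (mul_le_mul' ha hb).trans (le_of_eq Cardinal.aleph0_mul_aleph0)

lemma one_lt_omega1 : (1 : Ordinal.{0}) < ω₁ :=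
  lt_of_lt_of_le Ordinal.one_lt_omega0 (Ordinal.omega0_le_omega 1)

lemma iSup_nat_lt_omega1 (f : ℕ → Ordinal.{0}) (h : ∀ n, f n < ω₁) : (⨆ n, f n) < ω₁ := by
  exact Ordinal.iSup_lt_omega_one h

/-! ### the S-set of an ultrafilter -/

def SSet (U : Ultrafilter ℕ) : Set Ordinal.{1} :=
  {a | ∀ h : ℕ → Ordinal.{0}, (∀ n, h n < ω₁) → ∃ X ∈ U, otype (h '' X) ≤ a}

lemma isAlphaUF_iff {U : Ultrafilter ℕ} {α : Ordinal.{1}} :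
    IsAlphaUF U α ↔ IsLeast (SSet U) α := Iff.rfl

lemma SSet_subset_of_rkle {A B : Ultrafilter ℕ} (h : RKle A B) : SSet B ⊆ SSet A := by
  obtain ⟨f, rfl⟩ := h
  intro a ha g hg
  obtain ⟨X, hX, hXle⟩ := ha (g ∘ f) (fun n => hg (f n))
  refine ⟨f '' X, ?_, ?_⟩
  · rw [Ultrafilter.mem_map]
    exact Filter.mem_of_superset hX (Set.subset_preimage_image f X)
  · rwa [← Set.image_comp]

lemma isAlphaUF_of_equiv {A B : Ultrafilter ℕ} {α : Ordinal.{1}}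
    (h : RKequiv A B) (hB : IsAlphaUF B α) : IsAlphaUF A α := by
  rw [isAlphaUF_iff] at *
  have h1 : SSet A = SSet B :=
    le_antisymm (SSet_subset_of_rkle h.2) (SSet_subset_of_rkle h.1)
  rwa [h1]

lemma rkle_refl (U : Ultrafilter ℕ) : RKle U U := ⟨id, Ultrafilter.map_id U⟩

/-- Nonprincipality of U from existence of a predecessor. -/
lemma nonprincipal_of_pred {U V : Ultrafilter ℕ} (h : RKpred V U) :
    ∀ a : ℕ, U ≠ pure a := by
  rintro a rfl
  obtain ⟨⟨f, hf⟩, hnp, _⟩ := h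
  have hV : V = pure (f a) := by rw [← hf, Ultrafilter.map_pure]
  exact hnp ⟨V, ⟨f a, hV⟩, ⟨rkle_refl V, rkle_refl V⟩⟩

lemma infinite_of_mem {U : Ultrafilter ℕ} (hU : ∀ a : ℕ, U ≠ pure a)
    {X : Set ℕ} (hX : X ∈ U) : X.Infinite := by
  by_contra hfin
  rw [Set.not_infinite] at hfin
  obtain ⟨a, _, ha⟩ := Ultrafilter.eq_pure_of_finite_mem hfin hX
  exact hU a ha

/-- the witness extraction -/
lemma exists_witness {U : Ultrafilter ℕ} {α : Ordinal.{1}} (hU : IsAlphaUF U α)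
    {ξ : Ordinal.{1}} (hξ : ξ < α) :
    ∃ h₀ : ℕ → Ordinal.{0}, (∀ n, h₀ n < ω₁) ∧ ∀ X ∈ U, ξ < otype (h₀ '' X) := by
  by_contra hcon
  push_neg at hcon
  have : ξ ∈ SSet U := by
    intro h hg
    obtain ⟨X, hX, hle⟩ := hcon h hg
    exact ⟨X, hX, hle⟩
  exact absurd (hU.2 this) (not_le_of_gt hξ)

/-- every no-fiber quotient of U is an α-ultrafilter -/
lemma quotient_isAlphaUF {U : Ultrafilter ℕ} {α : Ordinal.{1}}
    (hU : IsAlphaUF U α)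
    (hpred : ∀ V : Ultrafilter ℕ, RKpred V U → IsAlphaUF V α)
    (ζ : ℕ → ℕ) (hnofib : ∀ c : ℕ, ζ ⁻¹' {c} ∉ U) :
    IsAlphaUF (Ultrafilter.map ζ U) α := by
  classical
  set W := Ultrafilter.map ζ U with hW
  have hWnp : ∀ c : ℕ, W ≠ pure c := by
    intro c hc
    apply hnofib c
    have : ({c} : Set ℕ) ∈ W := by rw [hc]; exact rfl
    rwa [hW, Ultrafilter.mem_map] at this
  by_cases heq : RKequiv W U
  · exact isAlphaUF_of_equiv heq hU
  · apply hpred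
    refine ⟨⟨ζ, rfl⟩, ?_, heq⟩
    rintro ⟨W', ⟨a, rfl⟩, hequiv⟩
    obtain ⟨g, hg⟩ := hequiv.1
    rw [Ultrafilter.map_pure] at hg
    exact hWnp (g a) hg.symm


end StmtAux

namespace StmtAux
open Cardinal

lemma omega_le_otype_of_infinite {A : Set Ordinal.{0}} (h : A.Infinite) :
    (ω : Ordinal.{1}) ≤ otype A := by
  by_contra hlt
  push_neg at hlt
  obtain ⟨n, hn⟩ := Ordinal.lt_omega0.mp hlt
  have h1 : (otype A).card = #(↥A) := Ordinal.card_type _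
  have h2 : (ℵ₀ : Cardinal.{1}) ≤ #(↥A) := by
    rw [Cardinal.aleph0_le_mk_iff]
    exact h.to_subtype
  rw [← h1, hn, Ordinal.card_nat] at h2
  exact absurd h2 (not_le_of_gt (Cardinal.nat_lt_aleph0 n))

lemma ordinal_add_le_cancel {a b c : Ordinal.{1}} (h : a + b ≤ a + c) : b ≤ c := by
  by_contra hcon
  push_neg at hcon
  have := add_lt_add_right hcon a
  exact absurd (lt_of_lt_of_le this h) (lt_irrefl _)

/-- Step 1: the minimal rank is a power of ω. -/
lemma step1 {U : Ultrafilter ℕ} {α : Ordinal.{1}} (hU : IsAlphaUF U α)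
    (hnp : ∀ a : ℕ, U ≠ pure a) :
    ∃ β : Ordinal.{1}, α = ω ^ β ∧ 0 < β := by
  classical
  have hωα : (ω : Ordinal.{1}) ≤ α := by
    obtain ⟨X, hX, hle⟩ := hU.1 (fun n => (n : Ordinal.{0}))
      (fun n => lt_of_lt_of_le (Ordinal.nat_lt_omega0 n) (Ordinal.omega0_le_omega 1))
    refine le_trans ?_ hle
    apply omega_le_otype_of_infinite
    apply Set.Infinite.image ?_ (infinite_of_mem hnp hX)
    intro x _ y _ hxy
    exact Nat.cast_injective hxy
  have hprin : ∀ a b : Ordinal.{1}, a < α → b < α → a + b < α := by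
    intro a b ha hb
    by_contra hcon
    push_neg at hcon
    have hmax : max a b ∈ SSet U := by
      intro h hg
      obtain ⟨X, hX, hle⟩ := hU.1 h hg
      have hZab : otype (h '' X) ≤ a + b := le_trans hle hcon
      by_cases hcase : otype (h '' X) ≤ a
      · exact ⟨X, hX, le_trans hcase (le_max_left a b)⟩
      · push_neg at hcase
        obtain ⟨z, hz, hzeq⟩ := exists_initSeg_eq hcase
        set X₁ := X ∩ h ⁻¹' {y | y < z} with hX₁def
        set X₂ := X ∩ h ⁻¹' {y | ¬ y < z} with hX₂def
        have hunion : X₁ ∪ X₂ = X := by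
          ext n
          constructor
          · rintro (hn | hn) <;> exact hn.1
          · intro hn
            by_cases h' : h n < z
            · exact Or.inl ⟨hn, h'⟩
            · exact Or.inr ⟨hn, h'⟩
        have hmem : X₁ ∈ U ∨ X₂ ∈ U := by
          rw [← Ultrafilter.union_mem_iff, hunion]
          exact hX
        have hinit_sub : h '' X₁ ⊆ {x | x ∈ h '' X ∧ x < z} := by
          rintro _ ⟨n, hn, rfl⟩
          exact ⟨⟨n, hn.1, rfl⟩, hn.2⟩
        have htail_sub : h '' X₂ ⊆ {x | x ∈ h '' X ∧ ¬ x < z} := by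
          rintro _ ⟨n, hn, rfl⟩
          exact ⟨⟨n, hn.1, rfl⟩, hn.2⟩
        rcases hmem with h1 | h2
        · refine ⟨X₁, h1, ?_⟩
          refine le_trans (le_trans (otype_mono hinit_sub) (le_of_eq hzeq)) (le_max_left a b)
        · refine ⟨X₂, h2, ?_⟩
          have hsep : ∀ x ∈ {x | x ∈ h '' X ∧ x < z}, ∀ y ∈ {x | x ∈ h '' X ∧ ¬ x < z},
              x < y := by
            rintro x ⟨_, hx⟩ y ⟨_, hy⟩
            exact lt_of_lt_of_le hx (le_of_not_gt hy)
          have hcover : {x | x ∈ h '' X ∧ x < z} ∪ {x | x ∈ h '' X ∧ ¬ x < z} = h '' X := by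
            ext x
            constructor
            · rintro (hx | hx) <;> exact hx.1
            · intro hx
              by_cases h' : x < z
              · exact Or.inl ⟨hx, h'⟩
              · exact Or.inr ⟨hx, h'⟩
          have hge := otype_union_ge hsep
          rw [hcover, hzeq] at hge
          have htail_le : otype {x | x ∈ h '' X ∧ ¬ x < z} ≤ b :=
            ordinal_add_le_cancel (le_trans hge hZab)
          exact le_trans (le_trans (otype_mono htail_sub) htail_le) (le_max_right a b)
    have hcontra := hU.2 hmax
    exact absurd (lt_of_le_of_lt hcontra (max_lt ha hb)) (lt_irrefl α)
  have hprin' : Ordinal.Principal (· + ·) α := by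
    intro a b ha hb
    exact hprin a b ha hb
  rcases Ordinal.principal_add_iff_zero_or_omega0_opow.mp hprin' with h0 | ⟨β, hβ⟩
  · exfalso
    rw [h0] at hωα
    exact absurd (lt_of_lt_of_le Ordinal.omega0_pos hωα) (lt_irrefl _)
  · have hβ' : (ω : Ordinal.{1}) ^ β = α := hβ
    refine ⟨β, hβ'.symm, ?_⟩
    by_contra hβ0
    push_neg at hβ0
    rw [nonpos_iff_eq_zero] at hβ0
    rw [hβ0, Ordinal.opow_zero] at hβ'
    rw [← hβ'] at hωα
    exact absurd (lt_of_lt_of_le Ordinal.one_lt_omega0 hωα) (lt_irrefl _)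

end StmtAux

namespace StmtAux

/-- **Uniformization (Q).** If `β < c + β` (so that `ω^c·α > α`), every quotient of `U`
with no fiber in `U` has, for each `h`, a set in `U` all whose fiber-images have order
type `< ω^c`. -/
lemma Q_general {U : Ultrafilter ℕ} {α β c : Ordinal.{1}}
    (hU : IsAlphaUF U α)
    (hpred : ∀ V : Ultrafilter ℕ, RKpred V U → IsAlphaUF V α)
    (hα : α = ω ^ β)
    (hlim : Order.IsSuccLimit α)
    (hc : β < c + β)
    (ζ : ℕ → ℕ) (hnofib : ∀ p : ℕ, ζ ⁻¹' {p} ∉ U)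
    (h : ℕ → Ordinal.{0}) (hg : ∀ n, h n < ω₁) :
    ∃ X ∈ U, ∀ p : ℕ, otype (h '' (X ∩ ζ ⁻¹' {p})) < ω ^ c := by
  classical
  by_contra hcon
  push_neg at hcon
  set μ := (ω : Ordinal.{1}) ^ c with hμdef
  have hμpos : 0 < μ := Ordinal.opow_pos c Ordinal.omega0_pos
  set W := Ultrafilter.map ζ U with hWdef
  have hW : IsAlphaUF W α := quotient_isAlphaUF hU hpred ζ hnofib
  -- the sup bound Θ
  set Θ : Ordinal.{0} := (⨆ n, h n) + 1 with hΘdef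
  have hΘlt : Θ < ω₁ := add_lt_omega1 (iSup_nat_lt_omega1 h hg) one_lt_omega1
  have hhΘ : ∀ n, h n < Θ := by
    intro n
    refine lt_of_le_of_lt (Ordinal.le_iSup h n) ?_
    calc (⨆ n, h n) = (⨆ n, h n) + 0 := (add_zero _).symm
      _ < (⨆ n, h n) + 1 := add_lt_add_right zero_lt_one _
  have key : ∀ ξ : Ordinal.{1}, ξ < α → μ * (ξ + 1) ≤ α := by
    intro ξ hξ
    obtain ⟨h', hg', hwit⟩ := exists_witness hW hξ
    set bigh : ℕ → Ordinal.{0} := fun n => Θ * (h' (ζ n)) + h n with hbighdef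
    have hbighg : ∀ n, bigh n < ω₁ :=
      fun n => add_lt_omega1 (mul_lt_omega1 hΘlt (hg' (ζ n))) (hg n)
    obtain ⟨X, hX, hXle⟩ := hU.1 bigh hbighg
    set S : Set ℕ := {p | μ ≤ otype (h '' (X ∩ ζ ⁻¹' {p}))} with hSdef
    have hSW : S ∈ W := by
      by_contra hSnot
      have hScW : Sᶜ ∈ W := Ultrafilter.compl_mem_iff_notMem.mpr hSnot
      have hpre : ζ ⁻¹' Sᶜ ∈ U := Ultrafilter.mem_map.mp hScW
      obtain ⟨p, hp⟩ := hcon (X ∩ ζ ⁻¹' Sᶜ) (Filter.inter_mem hX hpre)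
      have hsub : X ∩ ζ ⁻¹' Sᶜ ∩ ζ ⁻¹' {p} ⊆ X ∩ ζ ⁻¹' {p} := by
        intro n hn
        exact ⟨hn.1.1, hn.2⟩
      have hp' : μ ≤ otype (h '' (X ∩ ζ ⁻¹' {p})) :=
        le_trans hp (otype_mono (Set.image_mono hsub))
      have hne : (X ∩ ζ ⁻¹' Sᶜ ∩ ζ ⁻¹' {p}).Nonempty := by
        by_contra hemp
        rw [Set.not_nonempty_iff_eq_empty] at hemp
        rw [hemp, Set.image_empty, otype_empty] at hp
        exact absurd (lt_of_lt_of_le hμpos hp) (lt_irrefl _)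
      obtain ⟨n, hn⟩ := hne
      have hζn : ζ n = p := hn.2
      have hpSc : p ∈ Sᶜ := hζn ▸ hn.1.2
      exact hpSc hp'
    have hT := hwit S hSW
    -- blocks
    set As : Ordinal.{0} → Set Ordinal.{0} :=
      fun v => bigh '' (X ∩ ζ ⁻¹' (h' ⁻¹' {v} ∩ S)) with hAsdef
    have hsub : ∀ v ∈ h' '' S, As v ⊆ bigh '' X := by
      intro v _
      exact Set.image_mono (fun n hn => hn.1)
    have hform : ∀ v, ∀ x ∈ As v, ∃ n ∈ X, h' (ζ n) = v ∧ x = Θ * v + h n := by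
      intro v x hx
      obtain ⟨n, hn, rfl⟩ := hx
      have h1 : h' (ζ n) = v := hn.2.1
      exact ⟨n, hn.1, h1, by rw [hbighdef]; simp [h1]⟩
    have hsep : ∀ v ∈ h' '' S, ∀ v' ∈ h' '' S, v < v' →
        ∀ x ∈ As v, ∀ y ∈ As v', x < y := by
      intro v _ v' _ hvv' x hx y hy
      obtain ⟨n, _, _, rfl⟩ := hform v x hx
      obtain ⟨m, _, _, rfl⟩ := hform v' y hy
      have h1 : Θ * v + h n < Θ * v + Θ := add_lt_add_right (hhΘ n) _
      have h2 : Θ * v + Θ = Θ * (v + 1) := by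
        rw [Ordinal.add_one_eq_succ, Ordinal.mul_succ]
      have h3 : Θ * (v + 1) ≤ Θ * v' := by
        apply mul_le_mul_right
        rw [Ordinal.add_one_eq_succ]
        exact Order.succ_le_of_lt hvv'
      calc Θ * v + h n < Θ * v + Θ := h1
        _ = Θ * (v + 1) := h2
        _ ≤ Θ * v' := h3
        _ ≤ Θ * v' + h m := le_self_add
    have hbig : ∀ v ∈ h' '' S, μ ≤ otype (As v) := by
      rintro v ⟨p, hpS, rfl⟩
      have hsub2 : bigh '' (X ∩ ζ ⁻¹' {p}) ⊆ As (h' p) := by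
        apply Set.image_mono
        intro n hn
        refine ⟨hn.1, ?_, ?_⟩
        · show ζ n ∈ h' ⁻¹' {h' p}
          rw [Set.mem_preimage, Set.mem_singleton_iff, show ζ n = p from hn.2]
        · show ζ n ∈ S
          rw [show ζ n = p from hn.2]
          exact hpS
      refine le_trans ?_ (otype_mono hsub2)
      -- otype (bigh '' (X ∩ ζ⁻¹'{p})) = otype (h '' (X ∩ ζ⁻¹'{p})) ≥ μ
      have himg : bigh '' (X ∩ ζ ⁻¹' {p}) =
          (fun x => Θ * (h' p) + x) '' (h '' (X ∩ ζ ⁻¹' {p})) := by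
        rw [← Set.image_comp]
        apply Set.image_congr
        intro n hn
        show bigh n = Θ * h' p + h n
        rw [hbighdef]
        simp [show ζ n = p from hn.2]
      rw [himg, otype_image]
      · exact hpS
      · intro x _ y _ hxy
        exact add_lt_add_right hxy _
    have hmul := mul_otype_le As hsub hsep hbig
    have hμT : μ * (ξ + 1) ≤ μ * otype (h' '' S) := by
      apply mul_le_mul_right
      rw [Ordinal.add_one_eq_succ]
      exact Order.succ_le_of_lt hT
    exact le_trans hμT (le_trans hmul hXle)
  -- conclude μ * α ≤ α, contradiction
  have hμα : μ * α ≤ α := by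
    rw [Ordinal.mul_le_iff_of_isSuccLimit hlim]
    intro b' hb'
    exact le_trans (mul_le_mul_right (le_self_add (a := b') (b := 1)) μ) (key b' hb')
  rw [hμdef, hα, ← Ordinal.opow_add] at hμα
  have := (Ordinal.opow_le_opow_iff_right Ordinal.one_lt_omega0).mp hμα
  exact absurd (lt_of_lt_of_le hc this) (lt_irrefl β)

end StmtAux

namespace StmtAux

/-- **Descent.** If furthermore `c < β`, we get an outright contradiction. -/
lemma descent {U : Ultrafilter ℕ} {α β c : Ordinal.{1}}
    (hU : IsAlphaUF U α)
    (hpred : ∀ V : Ultrafilter ℕ, RKpred V U → IsAlphaUF V α)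
    (hα : α = ω ^ β)
    (hlim : Order.IsSuccLimit α)
    (hc : β < c + β)
    (hcβ : c < β) : False := by
  classical
  set μ := (ω : Ordinal.{1}) ^ c with hμdef
  have hμpos : 0 < μ := Ordinal.opow_pos c Ordinal.omega0_pos
  have hμ1 : 1 ≤ μ := Order.one_le_iff_pos.mpr hμpos
  set ξ := μ * 2 with hξdef
  have hμξ : μ < ξ := by
    rw [hξdef]
    calc μ = μ * 1 := (mul_one μ).symm
      _ < μ * 2 := mul_lt_mul_of_pos_left one_lt_two hμpos
  have h1ξ : 1 < ξ := lt_of_le_of_lt hμ1 hμξ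
  have hξα : ξ < α := by
    have h2ω : (2 : Ordinal.{1}) < ω := by
      have := Ordinal.nat_lt_omega0 2
      simpa using this
    have hstep : μ * 2 < μ * ω := mul_lt_mul_of_pos_left h2ω hμpos
    have heq : μ * ω = ω ^ (c + 1) := by
      rw [hμdef, Ordinal.add_one_eq_succ, Ordinal.opow_succ]
    have hle : (ω : Ordinal.{1}) ^ (c + 1) ≤ ω ^ β := by
      apply (Ordinal.opow_le_opow_iff_right Ordinal.one_lt_omega0).mpr
      rw [Ordinal.add_one_eq_succ]
      exact Order.succ_le_of_lt hcβ
    rw [hξdef, hα]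
    exact lt_of_lt_of_le (heq ▸ hstep) hle
  have hμprin : ∀ x < μ, ∀ y < μ, x + y < μ := by
    intro x hx y hy
    exact Ordinal.principal_add_omega0_opow c hx hy
  obtain ⟨h₀, hg₀, hwit₀⟩ := exists_witness hU hξα
  have CLAIM : ∀ lam : Ordinal.{1}, ∀ X : Set ℕ, X ∈ U → otype (h₀ '' X) ≤ lam → False := by
    intro lam
    induction lam using Ordinal.induction with
    | _ lam IH =>
      intro X hXU hXlam
      set Z := h₀ '' X with hZdef
      have hξZ : ξ < otype Z := hwit₀ X hXU
      by_cases hmax : ∃ m ∈ Z, ∀ y ∈ Z, y ≤ m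
      · -- `Z` has a maximum
        obtain ⟨m, hmZ, hm⟩ := hmax
        set X₂ := X ∩ h₀ ⁻¹' {m} with hX₂def
        set X₁ := X \ h₀ ⁻¹' {m} with hX₁def
        have hun : X₂ ∪ X₁ = X := by
          ext n
          constructor
          · rintro (hn | hn)
            · exact hn.1
            · exact hn.1
          · intro hn
            by_cases h' : h₀ n ∈ ({m} : Set Ordinal.{0})
            · exact Or.inl ⟨hn, h'⟩
            · exact Or.inr ⟨hn, h'⟩
        rcases Ultrafilter.union_mem_iff.mp (by rw [hun]; exact hXU) with h2 | h1
        · -- the fiber of the max is large: image is a singleton, contradiction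
          have hss : otype (h₀ '' X₂) ≤ 1 := by
            apply otype_subsingleton
            rintro x ⟨n, hn, rfl⟩ y ⟨n', hn', rfl⟩
            have e1 : h₀ n = m := hn.2
            have e2 : h₀ n' = m := hn'.2
            rw [e1, e2]
          exact absurd (lt_of_lt_of_le (hwit₀ X₂ h2) hss) (not_lt_of_gt h1ξ)
        · -- cut the max off and recurse
          have hsub : h₀ '' X₁ ⊆ {x | x ∈ Z ∧ x < m} := by
            rintro x ⟨n, hn, rfl⟩
            refine ⟨⟨n, hn.1, rfl⟩, ?_⟩
            have hle : h₀ n ≤ m := hm _ ⟨n, hn.1, rfl⟩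
            exact lt_of_le_of_ne hle (fun he => hn.2 he)
          have hlt : otype {x | x ∈ Z ∧ x < m} < otype Z := otype_initSeg_lt hmZ
          exact IH (otype {x | x ∈ Z ∧ x < m}) (lt_of_lt_of_le hlt hXlam) X₁ h1
            (otype_mono hsub)
      · -- `Z` has no maximum : build a cofinal ω-sequence and a level quotient
        push_neg at hmax
        have habove : ∀ w ∈ Z, ∃ w' ∈ Z, w < w' := hmax
        have hZne : Z.Nonempty := by
          rcases Set.eq_empty_or_nonempty Z with he | hne
          · rw [he, otype_empty] at hξZ
            exact absurd hξZ (by simp)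
          · exact hne
        obtain ⟨z0, hz0⟩ := hZne
        obtain ⟨n₀, hn₀X, hn₀⟩ := hz0
        set a : ℕ → Ordinal.{0} := fun k => if k ∈ X then h₀ k else h₀ n₀ with hadef
        have haZ : ∀ k, a k ∈ Z := by
          intro k
          rw [hadef]
          by_cases hk : k ∈ X
          · simp only [hk, if_true]
            exact ⟨k, hk, rfl⟩
          · simp only [hk, if_false]
            exact ⟨n₀, hn₀X, rfl⟩
        have hacov : ∀ n ∈ X, a n = h₀ n := by
          intro n hn
          rw [hadef]
          simp only [hn, if_true]
        -- package as subtype and use choice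
        have hupex : ∀ w : ↥Z, ∃ w' : ↥Z, w.1 < w'.1 := by
          rintro ⟨w, hw⟩
          obtain ⟨w', hw', hlt⟩ := habove w hw
          exact ⟨⟨w', hw'⟩, hlt⟩
        choose up hup using hupex
        have hmaxZ : ∀ (x y : ↥Z), (⟨max x.1 y.1, by
            rcases max_cases x.1 y.1 with ⟨he, _⟩ | ⟨he, _⟩
            · rw [he]; exact x.2
            · rw [he]; exact y.2⟩ : ↥Z) = (⟨max x.1 y.1, by
            rcases max_cases x.1 y.1 with ⟨he, _⟩ | ⟨he, _⟩
            · rw [he]; exact x.2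
            · rw [he]; exact y.2⟩ : ↥Z) := fun x y => rfl
        set maxZ : ↥Z → ↥Z → ↥Z := fun x y => ⟨max x.1 y.1, by
          rcases max_cases x.1 y.1 with ⟨he, _⟩ | ⟨he, _⟩
          · rw [he]; exact x.2
          · rw [he]; exact y.2⟩ with hmaxZdef
        set aZ : ℕ → ↥Z := fun k => ⟨a k, haZ k⟩ with haZdef
        set zz : ℕ → ↥Z := fun k =>
          Nat.rec (up (aZ 0)) (fun k zk => up (maxZ zk (aZ (k + 1)))) k with hzzdef
        have hzzsucc : ∀ k, zz (k + 1) = up (maxZ (zz k) (aZ (k + 1))) := fun k => rfl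
        have hzzmono : ∀ k, (zz k).1 < (zz (k + 1)).1 := by
          intro k
          rw [hzzsucc k]
          refine lt_of_le_of_lt ?_ (hup (maxZ (zz k) (aZ (k + 1))))
          exact le_max_left _ _
        have hzzle : ∀ j k, j ≤ k → (zz j).1 ≤ (zz k).1 := by
          intro j k hjk
          induction k with
          | zero => rw [Nat.le_zero.mp hjk]
          | succ k IHk =>
            rcases Nat.lt_or_ge j (k + 1) with h' | h'
            · exact le_trans (IHk (Nat.lt_succ_iff.mp h')) (le_of_lt (hzzmono k))
            · rw [Nat.le_antisymm hjk h']
        have hcof : ∀ k, a k < (zz k).1 := by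
          intro k
          cases k with
          | zero => exact hup (aZ 0)
          | succ k =>
            rw [hzzsucc k]
            refine lt_of_le_of_lt ?_ (hup (maxZ (zz k) (aZ (k + 1))))
            exact le_max_right _ _
        -- the level of an element of X
        have hlevex : ∀ n ∈ X, ∃ j, h₀ n < (zz j).1 := by
          intro n hn
          exact ⟨n, by rw [← hacov n hn]; exact hcof n⟩
        set ζ : ℕ → ℕ := fun n => if hn : n ∈ X then Nat.find (hlevex n hn) else 0 with hζdef
        have hζspec : ∀ n (hn : n ∈ X), h₀ n < (zz (ζ n)).1 := by
          intro n hn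
          rw [hζdef]
          simp only [hn, dif_pos]
          exact Nat.find_spec (hlevex n hn)
        have hζmin : ∀ n (hn : n ∈ X), ∀ j < ζ n, ¬ h₀ n < (zz j).1 := by
          intro n hn j hj
          rw [hζdef] at hj
          simp only [hn, dif_pos] at hj
          exact Nat.find_min (hlevex n hn) hj
        by_cases hfib : ∃ j : ℕ, ζ ⁻¹' {j} ∈ U
        · -- a level set is large : recurse on a proper initial segment
          obtain ⟨j, hj⟩ := hfib
          set X' := X ∩ ζ ⁻¹' {j} with hX'def
          have hX'U : X' ∈ U := Filter.inter_mem hXU hj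
          have hsub : h₀ '' X' ⊆ {x | x ∈ Z ∧ x < (zz j).1} := by
            rintro x ⟨n, hn, rfl⟩
            refine ⟨⟨n, hn.1, rfl⟩, ?_⟩
            have : ζ n = j := hn.2
            rw [← this]
            exact hζspec n hn.1
          have hlt : otype {x | x ∈ Z ∧ x < (zz j).1} < otype Z := otype_initSeg_lt (zz j).2
          exact IH _ (lt_of_lt_of_le hlt hXlam) X' hX'U (otype_mono hsub)
        · -- no level set is large : apply uniformization and chunk bound
          push_neg at hfib
          obtain ⟨X'', hX''U, hfiblt⟩ := Q_general hU hpred hα hlim hc ζ hfib h₀ hg₀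
          set X3 := X'' ∩ X with hX3def
          have hX3U : X3 ∈ U := Filter.inter_mem hX''U hXU
          set Z3 := h₀ '' X3 with hZ3def
          have hfib3 : ∀ p : ℕ, otype (h₀ '' (X3 ∩ ζ ⁻¹' {p})) < μ := by
            intro p
            refine lt_of_le_of_lt (otype_mono (Set.image_mono ?_)) (hfiblt p)
            intro n hn
            exact ⟨hn.1.1, hn.2⟩
          have hB : ∀ j : ℕ, otype {x | x ∈ Z3 ∧ x < (zz j).1} < μ := by
            intro j
            induction j with
            | zero =>
              have hsub : {x | x ∈ Z3 ∧ x < (zz 0).1} ⊆ h₀ '' (X3 ∩ ζ ⁻¹' {0}) := by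
                rintro x ⟨⟨n, hn, rfl⟩, hxlt⟩
                refine ⟨n, ⟨hn, ?_⟩, rfl⟩
                show ζ n = 0
                rw [hζdef]
                simp only [hn.2, dif_pos]
                exact Nat.le_zero.mp (Nat.find_le hxlt)
              exact lt_of_le_of_lt (otype_mono hsub) (hfib3 0)
            | succ j IHj =>
              set P₁ := {x | x ∈ Z3 ∧ x < (zz j).1} with hP₁def
              set P₂ := {x | x ∈ Z3 ∧ ¬ x < (zz j).1 ∧ x < (zz (j + 1)).1} with hP₂def
              have hcover : {x | x ∈ Z3 ∧ x < (zz (j + 1)).1} = P₁ ∪ P₂ := by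
                ext x
                constructor
                · rintro ⟨hxZ, hxlt⟩
                  by_cases h' : x < (zz j).1
                  · exact Or.inl ⟨hxZ, h'⟩
                  · exact Or.inr ⟨hxZ, h', hxlt⟩
                · rintro (⟨hxZ, h'⟩ | ⟨hxZ, _, h'⟩)
                  · exact ⟨hxZ, lt_of_lt_of_le h' (le_of_lt (hzzmono j))⟩
                  · exact ⟨hxZ, h'⟩
              have hsub2 : P₂ ⊆ h₀ '' (X3 ∩ ζ ⁻¹' {j + 1}) := by
                rintro x ⟨⟨n, hn, rfl⟩, hxge, hxlt⟩
                refine ⟨n, ⟨hn, ?_⟩, rfl⟩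
                show ζ n = j + 1
                rw [hζdef]
                simp only [hn.2, dif_pos]
                have hle : Nat.find (hlevex n hn.2) ≤ j + 1 := Nat.find_le hxlt
                rcases Nat.lt_or_ge (Nat.find (hlevex n hn.2)) (j + 1) with h' | h'
                · exfalso
                  have := Nat.find_spec (hlevex n hn.2)
                  have hzle : ((zz (Nat.find (hlevex n hn.2))).1 : Ordinal.{0}) ≤ (zz j).1 :=
                    hzzle _ _ (Nat.lt_succ_iff.mp h')
                  exact hxge (lt_of_lt_of_le this hzle)
                · exact Nat.le_antisymm hle h'
              have hsep : ∀ x ∈ P₁, ∀ y ∈ P₂, x < y := by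
                rintro x ⟨_, hx⟩ y ⟨_, hy, _⟩
                exact lt_of_lt_of_le hx (le_of_not_gt hy)
              have := otype_union_le hsep
              rw [← hcover] at this
              refine lt_of_le_of_lt this ?_
              exact hμprin _ IHj _ (lt_of_le_of_lt (otype_mono hsub2) (hfib3 (j + 1)))
          have hZ3μ : otype Z3 ≤ μ := by
            apply otype_le_of_initSeg
            rintro x ⟨n, hn, rfl⟩
            have hsub : {y | y ∈ Z3 ∧ y < h₀ n} ⊆ {y | y ∈ Z3 ∧ y < (zz (ζ n)).1} := by
              rintro y ⟨hy, hylt⟩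
              exact ⟨hy, lt_of_lt_of_le hylt (le_of_lt (hζspec n hn.2))⟩
            exact lt_of_le_of_lt (otype_mono hsub) (hB (ζ n))
          exact absurd (lt_of_lt_of_le (hwit₀ X3 hX3U) hZ3μ) (not_lt_of_gt hμξ)
  obtain ⟨X, hX, hle⟩ := hU.1 h₀ hg₀
  exact CLAIM α X hX hle

end StmtAux

/-- If `U` is an `α`-ultrafilter (`α ≤ ω₁`), all RK-predecessors of `U` are also
`α`-ultrafilters, and `U` is not RK-minimal (it has an RK-predecessor), then
`α = ω ^ β` for some additively indecomposable `β`. -/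
theorem stmt7 (U : Ultrafilter ℕ) (α : Ordinal.{1}) (hα : α ≤ ω₁)
    (hU : IsAlphaUF U α)
    (hpred : ∀ V : Ultrafilter ℕ, RKpred V U → IsAlphaUF V α)
    (hnotmin : ∃ V : Ultrafilter ℕ, RKpred V U) :
    ∃ β : Ordinal.{1}, α = ω ^ β ∧ ∀ γ δ : Ordinal.{1}, γ < β → δ < β → γ + δ < β := by
  classical
  obtain ⟨V, hV⟩ := hnotmin
  have hnp : ∀ a : ℕ, U ≠ pure a := StmtAux.nonprincipal_of_pred hV
  obtain ⟨β, hβ, hβpos⟩ := StmtAux.step1 hU hnp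
  refine ⟨β, hβ, ?_⟩
  intro γ δ hγ hδ
  by_contra hcon
  push_neg at hcon
  -- `α` is a limit ordinal
  have h1α : (1 : Ordinal.{1}) < α := by
    rw [hβ]
    calc (1 : Ordinal.{1}) = ω ^ (0 : Ordinal.{1}) := (Ordinal.opow_zero ω).symm
      _ < ω ^ β := (Ordinal.opow_lt_opow_iff_right Ordinal.one_lt_omega0).mpr hβpos
  have hlim : Order.IsSuccLimit α := by
    refine Ordinal.isSuccLimit_iff.mpr ⟨fun h0 => ?_, Order.isSuccPrelimit_iff_succ_lt.mpr fun a ha => ?_⟩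
    · rw [h0] at h1α
      exact absurd h1α (by simp)
    · rw [← Ordinal.add_one_eq_succ]
      have := Ordinal.principal_add_omega0_opow β (a := a) (b := 1)
      rw [← hβ] at this
      exact this ha h1α
  -- the least non-absorbed ordinal c
  set cset : Set Ordinal.{1} := {x | β < x + β} with hcsetdef
  have hne : cset.Nonempty := by
    refine ⟨β, ?_⟩
    show β < β + β
    rcases lt_or_ge β (β + β) with h | h
    · exact h
    · exfalso
      have h2 : β + β = β := le_antisymm h (le_add_self (a := β) (b := β))
      have h3 : β + β = β + 0 := by rw [h2, add_zero]
      have := (add_left_cancel_iff (a := β)).mp h3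
      rw [this] at hβpos
      exact absurd hβpos (lt_irrefl 0)
  set c := sInf cset with hcdef
  have hc : β < c + β := csInf_mem hne
  have hγc : γ ∈ cset := by
    show β < γ + β
    exact lt_of_le_of_lt hcon (add_lt_add_right hδ γ)
  have hcle : c ≤ γ := csInf_le' hγc
  have hcβ : c < β := lt_of_le_of_lt hcle hγ
  exact StmtAux.descent hU hpred hβ hlim hc hcβ
end

section
/- Let f, g : ω → ω and suppose that for every n in the range of some fixed X ⊆ ω under f, the set f⁻¹{n} ∩ X is infinite, and the order type of (g∘f)''X is at least ω^{k+1}. Define h : ω → ω₁ × ω (with the lexicographic order) by h(m) = (g(f(m)), m). Then the order type of h''X is at least ω^{k+2}. -/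
open Ordinal Set

/-- Order type of a subset of `ω₁ × ω` under the lexicographic well-order
(first coordinate dominant). -/
noncomputable def otypeLex (S : Set (Ordinal.{0} × ℕ)) : Ordinal.{1} :=
  @Ordinal.type S (Subrel (Prod.Lex (· < ·) (· < ·)) (· ∈ S)) (by exact inferInstance)

/-- If every fiber of `f` over `f '' X` meets `X` infinitely and `(g ∘ f) '' X` has order
type at least `ω ^ (k + 1)`, then `h : m ↦ (g (f m), m)` (into `ω₁ × ω` with the
lexicographic order) has `h '' X` of order type at least `ω ^ (k + 2)`. -/
theorem stmt10 (f : ℕ → ℕ) (g : ℕ → Ordinal.{0}) (hg : ∀ n, g n < ω₁)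
    (X : Set ℕ) (k : ℕ)
    (hfib : ∀ n ∈ f '' X, (X ∩ f ⁻¹' {n}).Infinite)
    (hot : ω ^ ((k : Ordinal.{1}) + 1) ≤ otype ((g ∘ f) '' X)) :
    ω ^ ((k : Ordinal.{1}) + 2) ≤ otypeLex ((fun m => (g (f m), m)) '' X) := by
  set T : Set Ordinal.{0} := (g ∘ f) '' X with hT
  set S : Set (Ordinal.{0} × ℕ) := (fun m => (g (f m), m)) '' X with hS
  -- fibers
  have hFib : ∀ α ∈ T, {m | m ∈ X ∧ g (f m) = α}.Infinite := by
    rintro α ⟨x, hx, rfl⟩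
    refine (hfib (f x) ⟨x, hx, rfl⟩).mono ?_
    rintro m ⟨hm, hfm⟩
    exact ⟨hm, by simp only [Function.comp_apply]; rw [hfm]⟩
  -- the embedding
  have key : omega0.{1} * otype T ≤ otypeLex S := by
    have hmem : ∀ (p : ↥T × ULift.{1} ℕ),
        ((p.1 : Ordinal.{0}), Nat.nth (fun m => m ∈ X ∧ g (f m) = (p.1 : Ordinal.{0})) p.2.down) ∈ S := by
      intro p
      obtain ⟨hm, hgm⟩ := Nat.nth_mem_of_infinite (hFib p.1.1 p.1.2) p.2.down
      exact ⟨_, hm, by dsimp only; rw [hgm]⟩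
    have emb : Prod.Lex (Subrel ((· < ·) : Ordinal.{0} → _ → Prop) (· ∈ T))
        ((ULift.down ⁻¹'o ((· < ·) : ℕ → ℕ → Prop)) : ULift.{1} ℕ → ULift.{1} ℕ → Prop) ↪r
        (Subrel (Prod.Lex (· < ·) (· < ·)) (· ∈ S)) := by
      refine RelEmbedding.ofMonotone (fun p => ⟨_, hmem p⟩) ?_
      rintro ⟨⟨a, ha⟩, ⟨n⟩⟩ ⟨⟨b, hb⟩, ⟨n'⟩⟩ hlt
      rcases Prod.lex_iff.1 hlt with h | ⟨h1, h2⟩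
      · exact Prod.Lex.left _ _ h
      · cases Subtype.ext_iff.1 h1
        exact Prod.Lex.right _ ((Nat.nth_lt_nth (hFib a ha)).2 h2)
    have htyp : type (Prod.Lex (Subrel ((· < ·) : Ordinal.{0} → _ → Prop) (· ∈ T))
        ((ULift.down ⁻¹'o ((· < ·) : ℕ → ℕ → Prop)) : ULift.{1} ℕ → ULift.{1} ℕ → Prop))
        = omega0.{1} * otype T := by
      rw [type_prod_lex]
      congr 1
    have := emb.ordinal_type_le
    rw [htyp] at this
    exact this
  have e1 : ω ^ ((k : Ordinal.{1}) + 2) = ω * ω ^ ((k : Ordinal.{1}) + 1) := by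
    rw [show ((k : Ordinal.{1}) + 2) = 1 + ((k : Ordinal.{1}) + 1) by norm_cast; omega,
      opow_add, opow_one]
  rw [e1]
  exact le_trans (mul_le_mul_right hot omega0.{1}) key
end

section
/- The partial order ℙ whose conditions are sequences ⟨⟨E^i_j : j < n_i ; X_i⟩ : i ∈ ω⟩, where the X_i are pairwise disjoint infinite subsets of ω, each ⟨E^i_0, …, E^i_{n_i−1}⟩ is an increasing <_∞-chain of equivalence relations on X_i with E^i_0 equality and E^i_{n_i−1} trivial, and limsup_i n_i = ∞, ordered as in the paper, is countably closed: every decreasing ω-sequence of conditions has a lower bound. -/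
open Ordinal Set

/-- `E` is an equivalence relation on the set `X`. -/
def EqvOn (E : ℕ → ℕ → Prop) (X : Set ℕ) : Prop :=
  (∀ x ∈ X, E x x) ∧ (∀ x ∈ X, ∀ y ∈ X, E x y → E y x) ∧
    (∀ x ∈ X, ∀ y ∈ X, ∀ z ∈ X, E x y → E y z → E x z)

/-- The `E`-equivalence class of `x` within `X`. -/
def eclass (E : ℕ → ℕ → Prop) (X : Set ℕ) (x : ℕ) : Set ℕ := {y ∈ X | E x y}

/-- `E <_∞ F` on `X`: `E` refines `F` and every `F`-class is a union of infinitely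
many `E`-classes. -/
def InfFiner (E F : ℕ → ℕ → Prop) (X : Set ℕ) : Prop :=
  (∀ x ∈ X, ∀ y ∈ X, E x y → F x y) ∧
    ∀ x ∈ X, {C : Set ℕ | ∃ y ∈ X, F x y ∧ C = eclass E X y}.Infinite

/-- `⟨E 1, …, E n⟩` is an infinitely finer (`if`) sequence of equivalence relations on `X`. -/
def IfSeq (E : ℕ → ℕ → ℕ → Prop) (n : ℕ) (X : Set ℕ) : Prop :=
  (∀ i, 1 ≤ i → i ≤ n → EqvOn (E i) X) ∧
    ∀ i, 1 ≤ i → i < n → InfFiner (E i) (E (i + 1)) X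

/-- A condition of the partial order `ℙ`: a sequence `⟨⟨E^i_j : j < n_i ; X_i⟩ : i ∈ ω⟩`
of `<_∞`-increasing chains of equivalence relations on pairwise disjoint infinite sets,
with `E^i_0` equality, `E^i_{n_i - 1}` trivial, and `limsup_i n_i = ∞`. -/
structure PCond where
  X : ℕ → Set ℕ
  n : ℕ → ℕ
  E : ℕ → ℕ → ℕ → ℕ → Prop
  disj : ∀ i k, i ≠ k → Disjoint (X i) (X k)
  inf : ∀ i, (X i).Infinite
  npos : ∀ i, 1 ≤ n i
  eqv : ∀ i j, j < n i → EqvOn (E i j) (X i)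
  chain : ∀ i j, j + 1 < n i → InfFiner (E i j) (E i (j + 1)) (X i)
  bot : ∀ i, ∀ x ∈ X i, ∀ y ∈ X i, (E i 0 x y ↔ x = y)
  top : ∀ i, ∀ x ∈ X i, ∀ y ∈ X i, E i (n i - 1) x y
  limsup : ∀ N m : ℕ, ∃ i, m ≤ i ∧ N ≤ n i

/-- The ordering of `ℙ`: `p ≤ q` iff for all but finitely many `i` there are `k` and an
increasing `π` with `X_i^p ⊆ X_k^q` and `E^{i,p}_j = E^{k,q}_{π(j)} ↾ X_i^p`. -/
def PLe (p q : PCond) : Prop :=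
  ∃ I : ℕ, ∀ i, I ≤ i → ∃ k, p.X i ⊆ q.X k ∧ ∃ π : ℕ → ℕ,
    StrictMonoOn π (Set.Iio (p.n i)) ∧ (∀ j < p.n i, π j < q.n k) ∧
    ∀ j < p.n i, ∀ x ∈ p.X i, ∀ y ∈ p.X i, (p.E i j x y ↔ q.E k (π j) x y)

/-- `ℙ` is countably closed: every decreasing `ω`-sequence of conditions has a lower bound. -/
theorem stmt11 (p : ℕ → PCond) (hdec : ∀ m : ℕ, PLe (p (m + 1)) (p m)) :
    ∃ q : PCond, ∀ m : ℕ, PLe q (p m) := by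
  -- π j ≥ j for strictly monotone π on an initial segment
  have mono_ge : ∀ (π : ℕ → ℕ) (n : ℕ), StrictMonoOn π (Set.Iio n) → ∀ j, j < n → j ≤ π j := by
    intro π n h j
    induction j with
    | zero => intro _; exact Nat.zero_le _
    | succ j ih =>
      intro hj
      have h1 : π j < π (j + 1) := h (Set.mem_Iio.mpr (by omega)) (Set.mem_Iio.mpr hj) (by omega)
      have h2 := ih (by omega)
      omega
  -- Composition lemma: blocks of `p t` with large index and large `n` embed into `p m`
  have LC : ∀ m t, ∃ Θ ν : ℕ, ∀ i, m ≤ t → Θ ≤ i → ν < (p t).n i →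
      ∃ k, (p t).X i ⊆ (p m).X k ∧ (p t).n i ≤ (p m).n k ∧ ∃ π : ℕ → ℕ,
        StrictMonoOn π (Set.Iio ((p t).n i)) ∧ (∀ j < (p t).n i, π j < (p m).n k) ∧
        ∀ j < (p t).n i, ∀ x ∈ (p t).X i, ∀ y ∈ (p t).X i,
          ((p t).E i j x y ↔ (p m).E k (π j) x y) := by
    intro m t
    induction t with
    | zero =>
      refine ⟨0, 0, fun i hmt _ _ => ?_⟩
      obtain rfl : m = 0 := by omega
      exact ⟨i, subset_rfl, le_rfl, id, fun a _ b _ h => h, fun j hj => hj,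
        fun _ _ _ _ _ _ => Iff.rfl⟩
    | succ t ih =>
      by_cases hm : m = t + 1
      · subst hm
        exact ⟨0, 0, fun i _ _ _ => ⟨i, subset_rfl, le_rfl, id, fun a _ b _ h => h,
          fun j hj => hj, fun _ _ _ _ _ _ => Iff.rfl⟩⟩
      rcases Nat.lt_or_ge t m with hlt | hle
      · exact ⟨0, 0, fun i hmt _ _ => absurd hmt (by omega)⟩
      obtain ⟨Θ, ν, hIH⟩ := ih
      obtain ⟨I, hI⟩ := hdec t
      refine ⟨I, max ν ((Finset.range Θ).sup ((p t).n)), fun i hmt hΘ hν => ?_⟩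
      rw [max_lt_iff] at hν
      obtain ⟨hν1, hν2⟩ := hν
      obtain ⟨k₁, sub₁, π₁, mono₁, bd₁, iff₁⟩ := hI i hΘ
      have hn1 : 1 ≤ (p (t + 1)).n i := (p (t + 1)).npos i
      have hle1 : (p (t + 1)).n i ≤ (p t).n k₁ := by
        have h1 := mono_ge π₁ _ mono₁ ((p (t + 1)).n i - 1) (by omega)
        have h2 := bd₁ ((p (t + 1)).n i - 1) (by omega)
        omega
      have hk₁ : Θ ≤ k₁ := by
        by_contra hc
        have : (p t).n k₁ ≤ (Finset.range Θ).sup ((p t).n) :=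
          Finset.le_sup (Finset.mem_range.mpr (by omega))
        omega
      have hνk : ν < (p t).n k₁ := by omega
      obtain ⟨k, sub₂, le₂, π₂, mono₂, bd₂, iff₂⟩ := hIH k₁ hle hk₁ hνk
      refine ⟨k, sub₁.trans sub₂, le_trans hle1 le₂, π₂ ∘ π₁, ?_, ?_, ?_⟩
      · intro a ha b hb hab
        exact mono₂ (Set.mem_Iio.mpr (bd₁ a (Set.mem_Iio.mp ha)))
          (Set.mem_Iio.mpr (bd₁ b (Set.mem_Iio.mp hb))) (mono₁ ha hb hab)
      · intro j hj
        exact bd₂ _ (bd₁ j hj)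
      · intro j hj x hx y hy
        exact (iff₁ j hj x hx y hy).trans (iff₂ _ (bd₁ j hj) x (sub₁ hx) y (sub₁ hy))
  choose Θ ν hLC using LC
  -- choose one block from each `p s`, with indices above all thresholds and strictly
  -- increasing `n`-values
  have step : ∀ s prev : ℕ, ∃ v, (∀ m ≤ s, Θ m s ≤ v) ∧ (∀ m ≤ s, ν m s < (p s).n v) ∧
      s ≤ (p s).n v ∧ prev < (p s).n v := by
    intro s prev
    obtain ⟨v, hv1, hv2⟩ := (p s).limsup
      ((Finset.range (s + 1)).sup (fun m => ν m s) + s + prev + 1)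
      ((Finset.range (s + 1)).sup (fun m => Θ m s))
    refine ⟨v, fun m hm => le_trans (Finset.le_sup (f := fun m => Θ m s)
      (Finset.mem_range.mpr (by omega))) hv1, fun m hm => ?_, by omega, by omega⟩
    have h3 : ν m s ≤ (Finset.range (s + 1)).sup (fun m => ν m s) :=
      Finset.le_sup (f := fun m => ν m s) (Finset.mem_range.mpr (show m < s + 1 by omega))
    omega
  choose F hF using step
  let σ : ℕ → ℕ := fun s => Nat.rec (F 0 0) (fun t ih => F (t + 1) ((p t).n ih)) s
  have hP : ∀ s, (∀ m ≤ s, Θ m s ≤ σ s) ∧ (∀ m ≤ s, ν m s < (p s).n (σ s)) ∧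
      s ≤ (p s).n (σ s) ∧ (∀ t, t + 1 = s → (p t).n (σ t) < (p s).n (σ s)) := by
    intro s
    cases s with
    | zero =>
      obtain ⟨a, b, c, _⟩ := hF 0 0
      exact ⟨a, b, c, fun t ht => absurd ht (by omega)⟩
    | succ t =>
      obtain ⟨a, b, c, d⟩ := hF (t + 1) ((p t).n (σ t))
      refine ⟨a, b, c, fun t' ht' => ?_⟩
      obtain rfl : t' = t := by omega
      exact d
  have mono_n : StrictMono (fun s => (p s).n (σ s)) :=
    strictMono_nat_of_lt_succ (fun s => (hP (s + 1)).2.2.2 s rfl)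
  have disj' : ∀ a b, a < b → Disjoint ((p b).X (σ b)) ((p a).X (σ a)) := by
    intro a b hab
    obtain ⟨k, sub, nle, -⟩ := hLC a b (σ b) (le_of_lt hab) ((hP b).1 a (le_of_lt hab))
      ((hP b).2.1 a (le_of_lt hab))
    have hk : k ≠ σ a := by
      rintro rfl
      have := mono_n hab
      simp only at this
      omega
    exact Disjoint.mono_left sub ((p a).disj k (σ a) hk)
  refine ⟨{ X := fun s => (p s).X (σ s)
            n := fun s => (p s).n (σ s)
            E := fun s => (p s).E (σ s)
            disj := ?_
            inf := fun s => (p s).inf (σ s)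
            npos := fun s => (p s).npos (σ s)
            eqv := fun s => (p s).eqv (σ s)
            chain := fun s => (p s).chain (σ s)
            bot := fun s => (p s).bot (σ s)
            top := fun s => (p s).top (σ s)
            limsup := ?_ }, ?_⟩
  · intro a b hab
    rcases Nat.lt_or_gt_of_ne hab with h | h
    · exact (disj' a b h).symm
    · exact disj' b a h
  · intro N m
    exact ⟨max N m, le_max_right N m, le_trans (le_max_left N m) (hP (max N m)).2.2.1⟩
  · intro m
    refine ⟨m, fun s hs => ?_⟩
    obtain ⟨k, sub, nle, π, mono, bd, hiff⟩ := hLC m s (σ s) hs ((hP s).1 m hs)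
      ((hP s).2.1 m hs)
    exact ⟨k, sub, π, mono, bd, hiff⟩
end

section
/- If an ultrafilter U on ω is RK-minimal (Ramsey), then U is a P-point; consequently, for every h : ω → ω₁ there is X ∈ U with the order type of h''X at most ω. -/
open Ordinal Set

/-- `U` is Ramsey: every 2-coloring of pairs from `ω` has a homogeneous set in `U`. -/
def IsRamsey (U : Ultrafilter ℕ) : Prop :=
  ∀ c : ℕ → ℕ → Bool, ∃ X ∈ U,
    ∀ i ∈ X, ∀ j ∈ X, ∀ k ∈ X, ∀ l ∈ X, i < j → k < l → c i j = c k l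

/-- A set of ordinals in which every element has only finitely many predecessors
has order type at most `ω`. -/
lemma otype_le_omega0 (S : Set Ordinal.{0})
    (hS : ∀ a ∈ S, {b ∈ S | b < a}.Finite) : otype S ≤ ω := by
  have hω : (ω : Ordinal.{1}) = Ordinal.lift.{1,0} ω := (Ordinal.lift_omega0.{1,0}).symm
  unfold otype
  rw [hω, ← Ordinal.type_nat_lt, ← Ordinal.type_uLift]
  have hirr : IsAsymm (ULift.{1} ℕ) (ULift.down ⁻¹'o (· < · : ℕ → ℕ → Prop)) :=
    ⟨fun a b h h' => lt_asymm h h'⟩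
  refine RelEmbedding.ordinal_type_le
    (@RelEmbedding.ofMonotone _ _ _ _ _ hirr
      (fun a => ULift.up (hS a a.2).toFinset.card) ?_)
  rintro ⟨a, ha⟩ ⟨b, hb⟩ (hab : a < b)
  show (hS a ha).toFinset.card < (hS b hb).toFinset.card
  apply Finset.card_lt_card
  rw [Set.Finite.toFinset_ssubset_toFinset]
  constructor
  · rintro c ⟨hcS, hca⟩
    exact ⟨hcS, hca.trans hab⟩
  · intro hsub
    have : a ∈ {b_1 ∈ S | b_1 < a} := hsub ⟨ha, hab⟩
    exact lt_irrefl a this.2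

/-- If `U` is Ramsey (RK-minimal), then `U` is a P-point; consequently every `h : ω → ω₁`
admits `X ∈ U` with the order type of `h '' X` at most `ω`. -/
theorem stmt16 (U : Ultrafilter ℕ) (hU : IsRamsey U) :
    (∀ f : ℕ → ℕ, ∃ X ∈ U, ConstOn f X ∨ FinToOneOn f X) ∧
      ∀ h : ℕ → Ordinal.{0}, (∀ n, h n < ω₁) → ∃ X ∈ U, otype (h '' X) ≤ ω := by
  constructor
  · -- P-point
    intro f
    obtain ⟨X, hXU, hom⟩ := hU fun i j => decide (f i = f j)
    refine ⟨X, hXU, ?_⟩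
    by_cases hc : ∃ i ∈ X, ∃ j ∈ X, i < j ∧ f i = f j
    · -- constant case
      obtain ⟨i, hi, j, hj, hij, hfij⟩ := hc
      left
      refine ⟨f i, fun x hx => ?_⟩
      rcases lt_trichotomy x i with hxi | rfl | hxi
      · have := hom x hx i hi i hi j hj hxi hij
        simp only [decide_eq_decide] at this
        rw [this.2 hfij]
      · rfl
      · have := hom i hi x hx i hi j hj hxi hij
        simp only [decide_eq_decide] at this
        exact (this.2 hfij).symm
    · -- finite-to-one (indeed injective) case
      right
      push_neg at hc
      intro n
      apply Set.Subsingleton.finite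
      rintro x ⟨hxX, hxn⟩ y ⟨hyX, hyn⟩
      by_contra hxy
      rcases lt_or_gt_of_ne hxy with hlt | hlt
      · exact hc x hxX y hyX hlt (by simp_all)
      · exact hc y hyX x hxX hlt (by simp_all)
  · -- order type consequence
    intro h _
    obtain ⟨X, hXU, hom⟩ := hU fun i j => decide (h i ≤ h j)
    refine ⟨X, hXU, otype_le_omega0 _ ?_⟩
    rintro a ⟨x, hxX, rfl⟩
    by_cases hc : ∃ i ∈ X, ∃ j ∈ X, i < j ∧ h i ≤ h j
    · -- h is nondecreasing along X
      obtain ⟨i, hi, j, hj, hij, hfij⟩ := hc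
      have mono : ∀ y ∈ X, ∀ z ∈ X, y < z → h y ≤ h z := by
        intro y hy z hz hyz
        have := hom y hy z hz i hi j hj hyz hij
        simp only [decide_eq_decide] at this
        exact this.2 hfij
      have hsub : {b ∈ h '' X | b < h x} ⊆ h '' (X ∩ Set.Iio x) := by
        rintro b ⟨⟨y, hyX, rfl⟩, hba⟩
        refine ⟨y, ⟨hyX, ?_⟩, rfl⟩
        rcases lt_trichotomy y x with hyx | rfl | hyx
        · exact hyx
        · exact absurd hba (lt_irrefl _)
        · exact absurd (mono x hxX y hyX hyx) (not_le_of_gt hba)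
      exact ((Set.finite_Iio x).inter_of_right X).image h |>.subset hsub
    · -- h is strictly decreasing along X, so X is finite
      push_neg at hc
      have hXfin : X.Finite := by
        by_contra hinf
        have hinf' : (setOf (· ∈ X)).Infinite := hinf
        have hdec : ∀ n : ℕ, h (Nat.nth (· ∈ X) (n + 1)) < h (Nat.nth (· ∈ X) n) :=
          fun n => hc _ (Nat.nth_mem_of_infinite hinf' n) _
            (Nat.nth_mem_of_infinite hinf' (n + 1))
            (Nat.nth_strictMono hinf' (Nat.lt_succ_self n))
        exact (RelEmbedding.natGT _ hdec).not_wellFounded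
          wellFounded_lt
      exact (hXfin.image h).subset (fun b hb => hb.1)
end

section
/- Let U be an ultrafilter on ω, f : ω → ω, and X ∈ U with f⁻¹{n} ∩ X infinite for every n ∈ f''X. Let g : ω → ω₁ be such that the order type of g''(f''X) is at least some ordinal δ. Define h : ω → ω₁·ω (lex-identified as before) by h(m) = ordinal code of (g(f(m)), m). Then the order type of h''X is at least ω·δ. -/
open Ordinal Set

/-- Let `U` be an ultrafilter, `X ∈ U` with every fiber `f⁻¹{n} ∩ X` infinite for
`n ∈ f '' X`, and let `g : ω → ω₁` with `g '' (f '' X)` of order type at least `δ`.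
Then `h : m ↦ (g (f m), m)` (lexicographically identified with ordinals) has
`h '' X` of order type at least `ω · δ`. -/
theorem stmt19 (U : Ultrafilter ℕ) (f : ℕ → ℕ) (X : Set ℕ) (hXU : X ∈ U)
    (hfib : ∀ n ∈ f '' X, (X ∩ f ⁻¹' {n}).Infinite)
    (g : ℕ → Ordinal.{0}) (hg : ∀ n, g n < ω₁) (δ : Ordinal.{1})
    (hδ : δ ≤ otype (g '' (f '' X))) :
    ω * δ ≤ otypeLex ((fun m => (g (f m), m)) '' X) := by
  classical
  set T : Set Ordinal.{0} := g '' (f '' X) with hT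
  have key : ω * otype T ≤ otypeLex ((fun m => (g (f m), m)) '' X) := by
    -- choice of n for each v ∈ T
    have hch : ∀ v : T, ∃ n, n ∈ f '' X ∧ g n = (v : Ordinal) := by
      rintro ⟨v, hv⟩
      rw [hT, ← Set.image_comp] at hv
      obtain ⟨a, ha, hga⟩ := hv
      exact ⟨f a, Set.mem_image_of_mem f ha, hga⟩
    choose n hn hgn using hch
    set p : T → ℕ → Prop := fun v m => m ∈ X ∩ f ⁻¹' {n v} with hp
    have hinf : ∀ v : T, (setOf (p v)).Infinite := fun v => hfib (n v) (hn v)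
    set e : T → ℕ → ℕ := fun v k => Nat.nth (p v) k with he
    have hmem : ∀ v k, e v k ∈ X ∩ f ⁻¹' {n v} := fun v k => Nat.nth_mem_of_infinite (hinf v) k
    have hω : @Ordinal.type (ULift.{1} ℕ) (ULift.down ⁻¹'o (· < ·)) inferInstance = (ω : Ordinal.{1}) := by
      rw [type_uLift, type_nat_lt, lift_omega0]
    rw [otype] at *
    rw [← hω, ← type_prod_lex, otypeLex]
    refine Ordinal.type_le_iff'.2 ⟨RelEmbedding.ofMonotone
      (fun x => ⟨((x.1 : Ordinal), e x.1 x.2.down), ?_⟩) ?_⟩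
    · refine ⟨e x.1 x.2.down, (hmem x.1 x.2.down).1, ?_⟩
      have : f (e x.1 x.2.down) = n x.1 := (hmem x.1 x.2.down).2
      simp only [Prod.mk.injEq]
      exact ⟨by rw [this, hgn], trivial⟩
    · rintro ⟨a, k⟩ ⟨b, l⟩ h
      rcases Prod.lex_iff.1 h with h1 | ⟨h1, h2⟩
      · exact Prod.Lex.left _ _ h1
      · cases h1
        exact Prod.Lex.right _ ((Nat.nth_strictMono (hinf _)) h2)
  calc ω * δ ≤ ω * otype T := by
        exact mul_le_mul_right hδ ω
    _ ≤ _ := key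
end
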